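/- arXiv:1906.11480 — 7 statements merged into one kernel-verified Lean document; each statement's English description precedes it below -/
import Mathlib

section
/- Let T : ℝ^d × (S^{d-1})^d → (ℝ^d)^d be defined by T(z, u_1, …, u_d) = (z + r·u_1, …, z + r·u_d) for fixed r > 0. Then the Jacobian (absolute value of the determinant of the derivative) of T at (z, u_1, …, u_d) equals r^{d(d-1)} · ∇_d(u_1, …, u_d), where ∇_d(u_1, …, u_d) is the d-dimensional volume of the parallelotope spanned by u_1, …, u_d (equivalently |det(u_1 … u_d)|). -/
open MeasureTheory Metric Set Filter Matrix
open scoped ENNReal RealInnerProductSpace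

noncomputable section

/-- Auxiliary equivalence splitting a pair index into "first coordinate" and "rest". -/
def e0 (n : ℕ) : (Fin (n+1) × Fin (n+1)) ≃ (Fin (n+1) ⊕ (Fin (n+1) × Fin n)) where
  toFun p := Fin.cases (Sum.inl p.1) (fun k => Sum.inr (p.1, k)) p.2
  invFun c := Sum.elim (fun i => (i, 0)) (fun p => (p.1, p.2.succ)) c
  left_inv p := by
    obtain ⟨i, k⟩ := p
    induction k using Fin.cases <;> simp
  right_inv c := by rcases c with c | c <;> simp

/-- The absolute value of a determinant is invariant under arbitrary reindexing of rows
and columns by (possibly different) equivalences. -/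
lemma abs_det_submatrix_equiv {R C : Type*} [Fintype R] [DecidableEq R]
    [Fintype C] [DecidableEq C] (A : Matrix C C ℝ) (f g : R ≃ C) :
    |(A.submatrix ⇑f ⇑g).det| = |A.det| := by
  have h : A.submatrix ⇑f ⇑g = (A.submatrix ⇑f ⇑f).submatrix id ⇑(g.trans f.symm) := by
    ext x y
    simp
  rw [h, Matrix.det_permute', Matrix.det_submatrix_equiv_self, abs_mul]
  rcases Int.units_eq_one_or (Equiv.Perm.sign (g.trans f.symm)) with h1 | h1 <;>
    rw [h1] <;> norm_num

/-- The Jacobian of the map `T(z, u₁, …, u_d) = (z + r·u₁, …, z + r·u_d)`,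
computed as the absolute value of the determinant of the matrix of its differential
with respect to orthonormal bases of the tangent spaces (the standard basis of ℝ^d for the
`z`-coordinate and orthonormal bases `v i ·` of the tangent spaces of the spheres at the
points `u i`), equals `r^{d(d-1)} · ∇_d(u₁,…,u_d)` where
`∇_d(u₁,…,u_d) = |det (u₁ ⋯ u_d)|`. -/
theorem stmt_0 (d : ℕ) (hd : 1 ≤ d) (r : ℝ) (hr : 0 < r)
    (u : Fin d → EuclideanSpace ℝ (Fin d)) (hu : ∀ i, ‖u i‖ = 1)
    (v : Fin d → Fin (d - 1) → EuclideanSpace ℝ (Fin d))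
    (hv : ∀ i, Orthonormal ℝ (v i))
    (hvu : ∀ i j, inner ℝ (u i) (v i j) = (0:ℝ))
    (M : Matrix (Fin d × Fin d) (Fin d ⊕ (Fin d × Fin (d - 1))) ℝ)
    -- the derivative of `T` in the direction of the `j`-th standard basis vector of the
    -- `z`-coordinate has `k`-th coordinate of its `i`-th output point equal to `δ_{kj}`:
    (hM1 : ∀ i k j, M (i, k) (Sum.inl j) = if k = j then 1 else 0)
    -- the derivative of `T` in the direction of the tangent vector `v i' j` at `u i'`
    -- has `k`-th coordinate of its `i`-th output point equal to `r · (v i' j) k` if `i = i'`: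
    (hM2 : ∀ i k i' j, M (i, k) (Sum.inr (i', j)) = if i = i' then r * v i' j k else 0)
    (e : (Fin d × Fin d) ≃ (Fin d ⊕ (Fin d × Fin (d - 1)))) :
    |(M.submatrix id e).det| =
      r ^ (d * (d - 1)) * |(Matrix.of fun k i => u i k).det| := by
  obtain ⟨n, rfl⟩ : ∃ n, d = n + 1 := ⟨d - 1, (Nat.succ_pred_eq_of_pos hd).symm⟩
  -- inner products as coordinate sums
  have hinner : ∀ (x y : EuclideanSpace ℝ (Fin (n+1))), ⟪x, y⟫ = ∑ k, x k * y k := by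
    intro x y
    simp [PiLp.inner_apply, RCLike.inner_apply, mul_comm]
  have huu : ∀ i, ∑ k, u i k * u i k = 1 := by
    intro i
    rw [← hinner]
    rw [real_inner_self_eq_norm_sq, hu i]
    norm_num
  have huv : ∀ i j, ∑ k, u i k * v i j k = 0 := by
    intro i j
    rw [← hinner]
    exact hvu i j
  have hvv : ∀ i j j', ∑ k, v i j k * v i j' k = if j = j' then 1 else 0 := by
    intro i j j'
    rw [← hinner]
    exact orthonormal_iff_ite.mp (hv i) j j'
  -- the orthogonal matrices `w i` with columns `u i, v i 0, …, v i (n-1)`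
  set w : Fin (n+1) → Matrix (Fin (n+1)) (Fin (n+1)) ℝ :=
    fun i => Matrix.of fun k c => Fin.cases (motive := fun _ => ℝ) (u i k) (fun j => v i j k) c
    with hw_def
  have hw : ∀ i, (w i)ᵀ * (w i) = 1 := by
    intro i
    ext c c'
    rw [Matrix.mul_apply, Matrix.one_apply]
    simp only [Matrix.transpose_apply, hw_def, Matrix.of_apply]
    induction c using Fin.cases with
    | zero =>
      induction c' using Fin.cases with
      | zero => simpa using huu i
      | succ j => simpa [Fin.succ_ne_zero, (Fin.succ_ne_zero j).symm] using huv i j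
    | succ j =>
      induction c' using Fin.cases with
      | zero => simpa [(Fin.succ_ne_zero j).symm, mul_comm] using huv i j
      | succ j' => simpa [Fin.succ_inj] using hvv i j j'
  have hdetw : ∀ i, |(w i).det| = 1 := by
    intro i
    have h1 := congrArg Matrix.det (hw i)
    rw [Matrix.det_mul, Matrix.det_transpose, Matrix.det_one] at h1
    rcases mul_self_eq_one_iff.mp h1 with h2 | h2 <;> rw [h2] <;> norm_num
  -- reindex `M` so that rows and columns are indexed by the same (sum) type
  set B : Matrix (Fin (n+1) ⊕ (Fin (n+1) × Fin n)) (Fin (n+1) ⊕ (Fin (n+1) × Fin n)) ℝ :=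
    M.submatrix (⇑(e0 n).symm) id with hB_def
  have hMB : M.submatrix id ⇑e = B.submatrix ⇑(e0 n) ⇑e := by
    ext x y
    simp [hB_def]
  have step1 : |(M.submatrix id ⇑e).det| = |B.det| := by
    rw [hMB]
    exact abs_det_submatrix_equiv B (e0 n) e
  -- the block-diagonal orthogonal matrix, transported to the sum index type
  set bd : Matrix (Fin (n+1) × Fin (n+1)) (Fin (n+1) × Fin (n+1)) ℝ :=
    Matrix.of fun p q => if p.1 = q.1 then w q.1 q.2 p.2 else 0 with hbd_def
  set Wc : Matrix (Fin (n+1) ⊕ (Fin (n+1) × Fin n)) (Fin (n+1) ⊕ (Fin (n+1) × Fin n)) ℝ :=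
    bd.submatrix (⇑(e0 n).symm) (⇑(e0 n).symm) with hWc_def
  have hdetbd : |bd.det| = 1 := by
    have hbd2 : bd = (Matrix.blockDiagonal (fun i => (w i)ᵀ)).submatrix
        ⇑(Equiv.prodComm (Fin (n+1)) (Fin (n+1))) ⇑(Equiv.prodComm (Fin (n+1)) (Fin (n+1))) := by
      ext p q
      obtain ⟨i, k⟩ := p
      obtain ⟨i', k'⟩ := q
      rcases eq_or_ne i i' with h | h
      · subst h
        simp [hbd_def, Matrix.blockDiagonal_apply]
      · simp [hbd_def, Matrix.blockDiagonal_apply, h, Ne.symm h]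
    rw [hbd2, Matrix.det_submatrix_equiv_self, Matrix.det_blockDiagonal]
    rw [Finset.abs_prod]
    refine Finset.prod_eq_one fun i _ => ?_
    rw [Matrix.det_transpose]
    exact hdetw i
  have hdetWc : |Wc.det| = 1 := by
    rw [hWc_def, abs_det_submatrix_equiv]
    exact hdetbd
  -- compute the product `Wc * B`
  have hprod : Wc * B = Matrix.fromBlocks
      (Matrix.of fun i j => u i j) 0
      (Matrix.of fun (p : Fin (n+1) × Fin n) j => v p.1 p.2 j)
      (r • (1 : Matrix (Fin (n+1) × Fin n) (Fin (n+1) × Fin n) ℝ)) := by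
    ext c c'
    rw [Matrix.mul_apply]
    have key : ∀ (i : Fin (n+1)) (k : Fin (n+1)),
        (∑ c'', Wc (e0 n (i, k)) c'' * B c'' c') =
          ∑ k', w i k' k * M (i, k') c' := by
      intro i k
      rw [← Equiv.sum_comp (e0 n) (fun c'' => Wc (e0 n (i, k)) c'' * B c'' c')]
      have : ∀ p : Fin (n+1) × Fin (n+1),
          Wc (e0 n (i, k)) (e0 n p) * B (e0 n p) c' =
            (if i = p.1 then w p.1 p.2 k else 0) * M p c' := by
        intro p
        simp [hWc_def, hbd_def, hB_def]
      rw [Fintype.sum_congr _ _ this, Fintype.sum_prod_type]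
      rw [Finset.sum_comm]
      simp only [ite_mul, zero_mul, Finset.sum_ite_eq, Finset.mem_univ, if_true]
    rcases c with i | ⟨i, m⟩
    · have hc : (Sum.inl i : Fin (n+1) ⊕ (Fin (n+1) × Fin n)) = e0 n (i, 0) := by
        simp [e0]
      conv_lhs => rw [hc]
      rw [key]
      rcases c' with j | ⟨i', j⟩
      · -- first block column: entry is `u i j`
        simp only [hM1, mul_ite, mul_one, mul_zero]
        rw [Finset.sum_ite_eq' Finset.univ j (fun k' => w i k' 0)]
        simp [hw_def]
      · -- second block column: entry is `0`
        rcases eq_or_ne i i' with h | h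
        · subst h
          simp only [hM2, eq_self_iff_true, if_true]
          have h2 : ∀ k', w i k' (0 : Fin (n+1)) * (r * v i j k')
              = r * (u i k' * v i j k') := by
            intro k'
            simp only [hw_def, Matrix.of_apply, Fin.cases_zero]
            ring
          rw [Fintype.sum_congr _ _ h2, ← Finset.mul_sum, huv, mul_zero]
          simp
        · simp [hM2, h]
    · have hc : (Sum.inr (i, m) : Fin (n+1) ⊕ (Fin (n+1) × Fin n)) = e0 n (i, m.succ) := by
        simp [e0]
      conv_lhs => rw [hc]
      rw [key]
      rcases c' with j | ⟨i', j⟩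
      · -- third block: entry is `v i m j`
        simp only [hM1, mul_ite, mul_one, mul_zero]
        rw [Finset.sum_ite_eq' Finset.univ j (fun k' => w i k' m.succ)]
        simp [hw_def]
      · -- fourth block: entry is `r` on the diagonal, `0` off it
        rcases eq_or_ne i i' with h | h
        · subst h
          simp only [hM2, eq_self_iff_true, if_true]
          have h2 : ∀ k', w i k' m.succ * (r * v i j k')
              = r * (v i m k' * v i j k') := by
            intro k'
            simp only [hw_def, Matrix.of_apply, Fin.cases_succ]
            ring
          rw [Fintype.sum_congr _ _ h2, ← Finset.mul_sum, hvv]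
          rcases eq_or_ne m j with h3 | h3 <;>
            simp [h3, Matrix.one_apply, Prod.ext_iff]
        · simp [hM2, h, Matrix.one_apply, Prod.ext_iff]
  -- assemble
  have habs : |B.det| = r ^ ((n+1)*n) * |(Matrix.of fun k i => u i k).det| := by
    have h1 : |Wc.det * B.det| = |B.det| := by
      rw [abs_mul, hdetWc, one_mul]
    rw [← h1, ← Matrix.det_mul, hprod, Matrix.det_fromBlocks_zero₁₂, Matrix.det_smul,
      Matrix.det_one, mul_one, abs_mul]
    have hA : (Matrix.of fun i j => u i j)
        = (Matrix.of fun (k : Fin (n+1)) (i : Fin (n+1)) => u i k)ᵀ := by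
      ext k i
      simp
    rw [hA, Matrix.det_transpose]
    have hcard : |r ^ Fintype.card (Fin (n+1) × Fin n)| = r ^ ((n+1)*n) := by
      rw [abs_pow, abs_of_pos hr]
      simp [Fintype.card_prod]
    rw [hcard, mul_comm]
  rw [step1, habs]
  congr 1

end
end

section
/- Let K ⊂ ℝ^d be an r-hyperconvex body and x_1, …, x_n ∈ K. Then the intersection of all closed balls of radius r containing {x_1, …, x_n} is contained in K. -/
open MeasureTheory Metric Set Filter

noncomputable section

/-- The intersection of all closed balls of radius `r` containing the set `S`. -/
def ballHull (d : ℕ) (r : ℝ) (S : Set (EuclideanSpace ℝ (Fin d))) :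
    Set (EuclideanSpace ℝ (Fin d)) :=
  {y | ∀ c, S ⊆ closedBall c r → y ∈ closedBall c r}

/-- The `r`-spindle of two points. -/
def spindle (d : ℕ) (r : ℝ) (x y : EuclideanSpace ℝ (Fin d)) :
    Set (EuclideanSpace ℝ (Fin d)) :=
  ballHull d r {x, y}

private lemma realI {s I W V r : ℝ} (hV : V ≤ r) (hV0 : 0 ≤ V)
    (hE : V ^ 2 = s ^ 2 - 2 * I + W ^ 2) : (W ^ 2 + s ^ 2 - r ^ 2) / 2 ≤ I := by
  nlinarith

private lemma realE {r s a Z : ℝ} (hr : 0 < r) (h : r < Z) (hZ0 : 0 ≤ Z)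
    (hZ : Z ^ 2 = s ^ 2 + 2 * r * a + r ^ 2) : 0 < a + s ^ 2 / (2 * r) := by
  have h1 : 0 < s ^ 2 + 2 * r * a := by nlinarith
  have h2 : a + s ^ 2 / (2 * r) = (s ^ 2 + 2 * r * a) / (2 * r) := by field_simp; ring
  rw [h2]
  positivity

private lemma real1 {r s lam t X I W : ℝ} (hr : 0 < r) (hlam_pos : 0 < lam)
    (hlam_half : lam ≤ 1 / 2) (hlam_r : lam * s ^ 2 ≤ r ^ 2)
    (ht : t = lam * (1 - lam) * s ^ 2 / (2 * r))
    (hW : 0 ≤ W) (hWr : W ≤ r) (hI : (W ^ 2 + s ^ 2 - r ^ 2) / 2 ≤ I)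
    (hX : 0 ≤ X) (hX2 : X ^ 2 = lam ^ 2 * s ^ 2 - 2 * lam * I + W ^ 2) :
    t + X ≤ r := by
  have hβ : lam * (1 - lam) * s ^ 2 ≤ r ^ 2 := by nlinarith [sq_nonneg (lam * s)]
  have hB2 : X ^ 2 ≤ r ^ 2 - lam * (1 - lam) * s ^ 2 := by
    rw [hX2]
    nlinarith [mul_le_mul_of_nonneg_left hI (by linarith : (0:ℝ) ≤ 2 * lam),
      mul_nonneg (by linarith : (0:ℝ) ≤ 1 - lam)
        (by nlinarith : (0:ℝ) ≤ r ^ 2 - W ^ 2)]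
  have ht2 : t * (2 * r) = lam * (1 - lam) * s ^ 2 := by rw [ht]; field_simp
  have hr_t : 0 ≤ r - t := by nlinarith
  have ht0 : 0 ≤ t := by
    rw [ht]
    exact div_nonneg (mul_nonneg (mul_nonneg hlam_pos.le (by linarith)) (sq_nonneg s))
      (by linarith)
  nlinarith [sq_nonneg (X + t - r), mul_nonneg hX hr_t, mul_nonneg ht0 hr.le]

private lemma real_params {r δ s a ε C lam t : ℝ} (hr : 0 < r) (hδ : 0 < δ) (hs : 0 < s)
    (hε_def : ε = a + s ^ 2 / (2 * r)) (hC_def : C = s ^ 2 / (2 * r) + s)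
    (hC : 0 < C) (hlam_pos : 0 < lam) (hlam_half : lam ≤ 1 / 2)
    (hlam_ε : lam ≤ ε * r / s ^ 2) (hlam_δ : lam ≤ ε * δ / (2 * C ^ 2))
    (ht : t = lam * (1 - lam) * s ^ 2 / (2 * r)) :
    lam * ε / 2 ≤ t + lam * a ∧ t + lam * s ≤ lam * C ∧ lam * C ^ 2 ≤ ε * δ / 2 := by
  refine ⟨?_, ?_, ?_⟩
  · have h1 : lam * (s ^ 2 / (2 * r)) ≤ ε / 2 := by
      have h := mul_le_mul_of_nonneg_right hlam_ε
        (by positivity : (0:ℝ) ≤ s ^ 2 / (2 * r))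
      calc lam * (s ^ 2 / (2 * r)) ≤ ε * r / s ^ 2 * (s ^ 2 / (2 * r)) := h
        _ = ε / 2 := by field_simp
    have h2 : t + lam * a = lam * (ε - lam * (s ^ 2 / (2 * r))) := by
      rw [ht, hε_def]; field_simp; ring
    nlinarith [mul_le_mul_of_nonneg_left h1 hlam_pos.le]
  · rw [ht, hC_def]
    have h1 : lam * (1 - lam) * s ^ 2 / (2 * r) ≤ lam * (s ^ 2 / (2 * r)) := by
      rw [div_le_iff₀ (by linarith : (0:ℝ) < 2 * r)]
      have h : lam * (s ^ 2 / (2 * r)) * (2 * r) = lam * s ^ 2 := by field_simp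
      rw [h]
      nlinarith [sq_nonneg (lam * s)]
    nlinarith
  · have h := mul_le_mul_of_nonneg_right hlam_δ (by positivity : (0:ℝ) ≤ C ^ 2)
    calc lam * C ^ 2 ≤ ε * δ / (2 * C ^ 2) * C ^ 2 := h
      _ = ε * δ / 2 := by field_simp

private lemma real_final {δ t lam a s ε C N : ℝ} (hδ : 0 < δ) (hlam_pos : 0 < lam)
    (hε : 0 < ε) (ht_pos : 0 < t) (hs : 0 < s) (ha_le : a ≤ s)
    (h1 : lam * ε / 2 ≤ t + lam * a) (h2 : t + lam * s ≤ lam * C)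
    (h3 : lam * C ^ 2 ≤ ε * δ / 2) (hN : 0 ≤ N)
    (hN2 : N ^ 2 = (t - δ) ^ 2 + 2 * (t - δ) * lam * a + lam ^ 2 * s ^ 2) : N < δ := by
  have key1 : t ^ 2 + 2 * t * (lam * a) + lam ^ 2 * s ^ 2 ≤ (t + lam * s) ^ 2 := by
    nlinarith [mul_le_mul_of_nonneg_left ha_le
      (by positivity : (0:ℝ) ≤ 2 * t * lam)]
  have key2 : (t + lam * s) ^ 2 ≤ (lam * C) ^ 2 := by
    have h0 : 0 ≤ t + lam * s := by positivity
    nlinarith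
  have key3 : (lam * C) ^ 2 ≤ lam * (ε * δ / 2) := by nlinarith
  have key4 : lam * ε * δ / 2 ≤ δ * (t + lam * a) := by nlinarith
  have hεδpos : 0 < lam * ε * δ / 2 := by positivity
  have hsq : N ^ 2 < δ ^ 2 := by rw [hN2]; nlinarith
  nlinarith

open RealInnerProductSpace in
set_option maxHeartbeats 1000000 in
private lemma key (d : ℕ) (r : ℝ) (hr : 0 < r) (K : Set (EuclideanSpace ℝ (Fin d)))
    (hKcomp : IsCompact K) (hKne : K.Nonempty)
    (hKhyp : ∀ x ∈ K, ∀ y ∈ K, spindle d r x y ⊆ K) :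
    ballHull d r K ⊆ K := by
  intro y hy
  by_contra hyK
  obtain ⟨p, hpK, hpd⟩ := hKcomp.exists_infDist_eq_dist hKne y
  set δ : ℝ := infDist y K with hδdef
  have hδ : 0 < δ := by
    rw [hδdef]
    exact (hKcomp.isClosed.notMem_iff_infDist_pos hKne).1 hyK
  set u : EuclideanSpace ℝ (Fin d) := δ⁻¹ • (y - p) with hu_def
  have hyp : y - p = δ • u := by
    rw [hu_def, smul_smul, mul_inv_cancel₀ hδ.ne', one_smul]
  have hu : ‖u‖ = 1 := by
    have : ‖y - p‖ = δ := by rw [← dist_eq_norm, ← hpd]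
    rw [hu_def, norm_smul, this, Real.norm_eq_abs, abs_of_pos (inv_pos.2 hδ),
      inv_mul_cancel₀ hδ.ne']
  set c : EuclideanSpace ℝ (Fin d) := p - r • u with hc_def
  clear_value c u δ
  have hKball : K ⊆ closedBall c r := by
    intro z hz
    by_contra hzc
    have hzc' : r < dist z c := by simpa [mem_closedBall, not_le] using hzc
    set v : EuclideanSpace ℝ (Fin d) := z - p with hv_def
    have hzc2 : dist z c = ‖v + r • u‖ := by
      rw [dist_eq_norm, hc_def, hv_def]; congr 1; abel
    set s : ℝ := ‖v‖ with hs_def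
    set a : ℝ := ⟪v, u⟫ with ha_def
    clear_value s a
    clear_value v
    have hnormsq : ‖v + r • u‖ ^ 2 = s ^ 2 + 2 * r * a + r ^ 2 := by
      rw [norm_add_sq_real, real_inner_smul_right, norm_smul, Real.norm_eq_abs,
        abs_of_pos hr, hu, hs_def, ha_def]
      ring
    have hzcn : r < ‖v + r • u‖ := hzc2 ▸ hzc'
    have hs : 0 < s := by
      have h1 : ‖v + r • u‖ ≤ s + r := by
        calc ‖v + r • u‖ ≤ ‖v‖ + ‖r • u‖ := norm_add_le _ _
          _ = s + r := by
              rw [norm_smul, Real.norm_eq_abs, abs_of_pos hr, hu, mul_one, ← hs_def]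
      linarith
    have hε : 0 < a + s ^ 2 / (2 * r) := realE hr hzcn (norm_nonneg _) hnormsq
    set ε : ℝ := a + s ^ 2 / (2 * r) with hε_def
    set C : ℝ := s ^ 2 / (2 * r) + s with hC_def
    have hC : 0 < C := by rw [hC_def]; positivity
    set lam : ℝ := min (min (1/2) (r ^ 2 / s ^ 2)) (min (ε * r / s ^ 2) (ε * δ / (2 * C ^ 2)))
      with hlam_def
    clear_value ε C
    have hlam_pos : 0 < lam := by
      rw [hlam_def]
      apply lt_min <;> [skip; apply lt_min] <;> positivity
    have hlam_half : lam ≤ 1 / 2 := le_trans (min_le_left _ _) (min_le_left _ _)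
    have hlam_r : lam ≤ r ^ 2 / s ^ 2 := le_trans (min_le_left _ _) (min_le_right _ _)
    have hlam_ε : lam ≤ ε * r / s ^ 2 := le_trans (min_le_right _ _) (min_le_left _ _)
    have hlam_δ : lam ≤ ε * δ / (2 * C ^ 2) := le_trans (min_le_right _ _) (min_le_right _ _)
    clear_value lam
    have hlam_r' : lam * s ^ 2 ≤ r ^ 2 := by
      have h := mul_le_mul_of_nonneg_right hlam_r (by positivity : (0:ℝ) ≤ s ^ 2)
      rwa [div_mul_cancel₀ _ (by positivity : (s:ℝ) ^ 2 ≠ 0)] at h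
    set t : ℝ := lam * (1 - lam) * s ^ 2 / (2 * r) with ht_def
    clear_value t
    have ht_pos : 0 < t := by
      rw [ht_def]
      have h1 : (0:ℝ) < 1 - lam := by linarith
      positivity
    set q : EuclideanSpace ℝ (Fin d) := p + t • u + lam • v with hq_def
    clear_value q
    -- q is in the spindle of p and z
    have hq_spindle : q ∈ spindle d r p z := by
      intro c' hc'
      have hp' : dist p c' ≤ r := by
        have h := hc' (show p ∈ ({p, z} : Set _) from Or.inl rfl); simpa using h
      have hz' : dist z c' ≤ r := by
        have h := hc' (show z ∈ ({p, z} : Set _) from Or.inr rfl); simpa using h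
      set w : EuclideanSpace ℝ (Fin d) := c' - p with hw_def
      clear_value w
      have hw_le : ‖w‖ ≤ r := by
        rw [hw_def, ← dist_eq_norm, dist_comm]; exact hp'
      have hvw : ‖v - w‖ ≤ r := by
        have h : v - w = z - c' := by rw [hv_def, hw_def]; abel
        rw [h, ← dist_eq_norm]; exact hz'
      have hinner : (‖w‖ ^ 2 + s ^ 2 - r ^ 2) / 2 ≤ ⟪v, w⟫ :=
        realI hvw (norm_nonneg _)
          (by rw [norm_sub_sq_real, hs_def])
      have hexp : ‖lam • v - w‖ ^ 2 = lam ^ 2 * s ^ 2 - 2 * lam * ⟪v, w⟫ + ‖w‖ ^ 2 := by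
        rw [norm_sub_sq_real, real_inner_smul_left, norm_smul, Real.norm_eq_abs,
          abs_of_pos hlam_pos, hs_def]
        ring
      have hnorm_le : t + ‖lam • v - w‖ ≤ r :=
        real1 hr hlam_pos hlam_half hlam_r' ht_def (norm_nonneg w) hw_le hinner
          (norm_nonneg _) hexp
      have hqc' : dist q c' ≤ r := by
        have hqc : q - c' = t • u + (lam • v - w) := by
          rw [hq_def, hw_def]; abel
        calc dist q c' = ‖q - c'‖ := dist_eq_norm _ _
          _ = ‖t • u + (lam • v - w)‖ := by rw [hqc]
          _ ≤ ‖t • u‖ + ‖lam • v - w‖ := norm_add_le _ _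
          _ = t + ‖lam • v - w‖ := by
              rw [norm_smul, Real.norm_eq_abs, abs_of_pos ht_pos, hu, mul_one]
          _ ≤ r := hnorm_le
      simpa [mem_closedBall] using hqc'
    have hqK : q ∈ K := hKhyp p hpK z hz hq_spindle
    -- but q is strictly closer to y than δ
    have ha_le : a ≤ s := by
      rw [ha_def, hs_def]
      have h := real_inner_le_norm v u
      rwa [hu, mul_one] at h
    obtain ⟨hta, htC, hlamδ⟩ := real_params hr hδ hs hε_def hC_def hC hlam_pos
      hlam_half hlam_ε hlam_δ ht_def
    have hdist : dist q y < δ := by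
      have hqy : q - y = (t - δ) • u + lam • v := by
        have h : y = p + δ • u := by rw [← hyp]; abel
        rw [hq_def, h, sub_smul]; abel
      have hexp : ‖q - y‖ ^ 2 = (t - δ) ^ 2 + 2 * (t - δ) * lam * a + lam ^ 2 * s ^ 2 := by
        have h1 : ‖(t - δ) • u‖ ^ 2 = (t - δ) ^ 2 := by
          rw [norm_smul, mul_pow, hu, Real.norm_eq_abs, sq_abs, one_pow, mul_one]
        have h2 : ‖lam • v‖ ^ 2 = lam ^ 2 * s ^ 2 := by
          rw [norm_smul, mul_pow, Real.norm_eq_abs, sq_abs, hs_def]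
        have h3 : ⟪(t - δ) • u, lam • v⟫ = (t - δ) * lam * a := by
          rw [real_inner_smul_left, real_inner_smul_right, real_inner_comm, ← ha_def]; ring
        rw [hqy, norm_add_sq_real, h1, h2, h3]; ring
      rw [dist_eq_norm]
      exact real_final hδ hlam_pos hε ht_pos hs ha_le hta htC hlamδ (norm_nonneg _) hexp
    have hge : δ ≤ dist q y := by
      rw [hδdef, dist_comm]
      exact infDist_le_dist_of_mem hqK
    linarith
  have hy' : y ∈ closedBall c r := hy c hKball
  have hyc : dist y c = δ + r := by
    have h : y - c = (δ + r) • u := by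
      rw [hc_def, add_smul, ← hyp]; abel
    rw [dist_eq_norm, h, norm_smul, Real.norm_eq_abs, hu, mul_one,
      abs_of_pos (by linarith)]
  rw [mem_closedBall, hyc] at hy'
  linarith


/-- if `K` is an `r`-hyperconvex body and `x₁, …, x_n ∈ K`, then the
intersection of all closed balls of radius `r` containing `{x₁, …, x_n}` is contained
in `K`. -/
theorem stmt_3 (d n : ℕ) (r : ℝ) (hr : 0 < r) (K : Set (EuclideanSpace ℝ (Fin d)))
    (hKcomp : IsCompact K) (hKconv : Convex ℝ K) (hKint : (interior K).Nonempty)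
    (hKhyp : ∀ x ∈ K, ∀ y ∈ K, spindle d r x y ⊆ K)
    (x : Fin n → EuclideanSpace ℝ (Fin d)) (hn : 1 ≤ n) (hx : ∀ i, x i ∈ K) :
    ballHull d r (Set.range x) ⊆ K := by
  have hKne : K.Nonempty := hKint.mono interior_subset
  have hsub : Set.range x ⊆ K := by rintro _ ⟨i, rfl⟩; exact hx i
  intro y hy
  exact key d r hr K hKcomp hKne hKhyp (fun c hc => hy c (hsub.trans hc))

end
end

section
/- For any β ≥ 0, ω > 0, α > 0, and any function g(n) satisfying ((β+α+1)·ln n/(α·ω·n))^{1/α} < g(n) < ω^{-1/α} for all sufficiently large n, one has ∫_0^{g(n)} t^β (1 − ω t^α)^n dt ~ (1/(α ω^{(β+1)/α})) · Γ((β+1)/α) · n^{-(β+1)/α} as n → ∞, i.e. the ratio of the two sides tends to 1. -/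
open MeasureTheory Set Filter Real

noncomputable section

lemma betaReal_aux (a : ℝ) (ha : 0 < a) (n : ℕ) :
    ∫ x in (0:ℝ)..1, x ^ (a-1) * (1-x) ^ n
      = (n.factorial : ℝ) / ∏ j ∈ Finset.range (n+1), (a + j) := by
  have h := Complex.betaIntegral_eval_nat_add_one_right (u := (a:ℂ)) (by simpa using ha) n
  rw [Complex.betaIntegral] at h
  have heq : ∫ x in (0:ℝ)..1, (x:ℂ) ^ ((a:ℂ)-1) * (1-(x:ℝ):ℂ) ^ ((n:ℂ)+1-1)
      = ((∫ x in (0:ℝ)..1, x ^ (a-1) * (1-x) ^ n : ℝ) : ℂ) := by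
    rw [← intervalIntegral.integral_ofReal]
    refine intervalIntegral.integral_congr fun x hx => ?_
    rw [Set.uIcc_of_le (by norm_num : (0:ℝ) ≤ 1)] at hx
    have hx0 : (0:ℝ) ≤ x := hx.1
    have h1 : ((x ^ (a-1) : ℝ) : ℂ) = (x:ℂ) ^ ((a:ℂ)-1) := by
      rw [Complex.ofReal_cpow hx0]; push_cast; ring_nf
    rw [add_sub_cancel_right, Complex.cpow_natCast]
    push_cast [h1]
    ring
  rw [heq] at h
  have h2 : ((n.factorial : ℂ) / ∏ j ∈ Finset.range (n+1), ((a:ℂ) + j))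
      = ((n.factorial / ∏ j ∈ Finset.range (n+1), (a + j) : ℝ) : ℂ) := by
    push_cast
    ring
  rw [h2] at h
  exact_mod_cast h

lemma substLem_aux (β ω α : ℝ) (hβ : 0 ≤ β) (hω : 0 < ω) (hα : 0 < α) (n : ℕ) (x : ℝ) (hx : 0 ≤ x) :
    ∫ t in (0:ℝ)..x, t ^ β * (1 - ω * t ^ α) ^ n
      = (1 / (α * ω ^ ((β+1)/α))) * ∫ s in (0:ℝ)..(ω * x ^ α), s ^ ((β+1)/α - 1) * (1-s) ^ n := by
  set a : ℝ := (β+1)/α with ha_def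
  have ha : 0 < a := div_pos (by linarith) hα
  set f : ℝ → ℝ := fun t => ω * t ^ α with hf_def
  set f' : ℝ → ℝ := fun t => ω * (α * t ^ (α-1)) with hf'_def
  set G : ℝ → ℝ := fun u => u ^ (a-1) * (1-u) ^ n with hG_def
  have hca : Continuous (fun t : ℝ => t ^ α) := Real.continuous_rpow_const hα.le
  have hcβ : Continuous (fun t : ℝ => t ^ β) := Real.continuous_rpow_const hβ
  have hcf : Continuous f := continuous_const.mul hca
  have hφc : Continuous (fun t : ℝ => α * ω ^ a * (t ^ β * (1 - ω * t ^ α) ^ n)) := by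
    exact continuous_const.mul (hcβ.mul ((continuous_const.sub (continuous_const.mul hca)).pow n))
  have hexp : α - 1 + α * (a - 1) = β := by
    have : α * a = β + 1 := by rw [ha_def]; field_simp
    nlinarith [this]
  have hω1 : ω * ω ^ (a-1) = ω ^ a := by
    nth_rewrite 1 [← Real.rpow_one ω]
    rw [← Real.rpow_add hω]; ring_nf
  have hptwise : ∀ t : ℝ, 0 < t → f' t * G (f t) = α * ω ^ a * (t ^ β * (1 - ω * t ^ α) ^ n) := by
    intro t ht
    have h1 : (ω * t ^ α) ^ (a-1) = ω ^ (a-1) * t ^ (α*(a-1)) := by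
      rw [Real.mul_rpow hω.le (Real.rpow_nonneg ht.le α), ← Real.rpow_mul ht.le]
    have h2 : t ^ (α-1) * t ^ (α*(a-1)) = t ^ β := by
      rw [← Real.rpow_add ht, hexp]
    simp only [hf'_def, hG_def, hf_def]
    rw [h1]
    calc ω * (α * t ^ (α-1)) * (ω ^ (a-1) * t ^ (α*(a-1)) * (1 - ω * t ^ α) ^ n)
        = α * ((ω * ω ^ (a-1)) * ((t ^ (α-1) * t ^ (α*(a-1))) * (1 - ω * t ^ α) ^ n)) := by ring
      _ = α * ω ^ a * (t ^ β * (1 - ω * t ^ α) ^ n) := by rw [hω1, h2]; ring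
  have hne : ∀ᵐ t : ℝ ∂volume, t ≠ 0 := by
    have h0 : {t : ℝ | ¬ t ≠ 0} = {(0:ℝ)} := by ext t; simp
    rw [ae_iff, h0]; exact measure_singleton 0
  have hae : (fun t => α * ω ^ a * (t ^ β * (1 - ω * t ^ α) ^ n))
      =ᵐ[volume.restrict (Set.uIcc 0 x)] (fun t => f' t • (G ∘ f) t) := by
    filter_upwards [ae_restrict_mem measurableSet_uIcc, ae_restrict_of_ae hne] with t htm htne
    have ht : 0 < t := lt_of_le_of_ne ((Set.uIcc_of_le hx ▸ htm).1) (Ne.symm htne)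
    simpa using (hptwise t ht).symm
  have key : ∫ t in (0:ℝ)..x, f' t • (G ∘ f) t = ∫ u in (f 0)..(f x), G u := by
    apply intervalIntegral.integral_comp_smul_deriv''' hcf.continuousOn
    · intro t ht
      rw [min_eq_left hx, max_eq_right hx] at ht
      have : HasDerivAt f (f' t) t := by
        simpa [hf'_def] using
          (Real.hasDerivAt_rpow_const (p := α) (Or.inl (ne_of_gt ht.1))).const_mul ω
      exact this.hasDerivWithinAt
    · rw [min_eq_left hx, max_eq_right hx]
      have himg : f '' (Set.Ioo 0 x) ⊆ Set.Ioi (0:ℝ) := by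
        rintro u ⟨t, ht, rfl⟩
        exact mul_pos hω (Real.rpow_pos_of_pos ht.1 α)
      refine ContinuousOn.mono (s := Set.Ioi (0:ℝ)) ?_ himg
      refine ContinuousOn.mul ?_ (((continuous_const.sub continuous_id).pow n).continuousOn)
      exact fun u hu =>
        ((Real.continuousAt_rpow_const u (a-1) (Or.inl (ne_of_gt hu))).continuousWithinAt)
    · have hGint : IntervalIntegrable G volume 0 (ω * x ^ α) := by
        refine (intervalIntegral.intervalIntegrable_rpow'
          (by linarith : (-1:ℝ) < a-1)).mul_continuousOn ?_
        exact ((continuous_const.sub continuous_id).pow n).continuousOn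
      have h1 : 0 ≤ ω * x ^ α := mul_nonneg hω.le (Real.rpow_nonneg hx α)
      rw [intervalIntegrable_iff_integrableOn_Icc_of_le h1] at hGint
      refine hGint.mono_set ?_
      rintro u ⟨t, ht, rfl⟩
      rw [Set.uIcc_of_le hx] at ht
      exact ⟨mul_nonneg hω.le (Real.rpow_nonneg ht.1 α),
        mul_le_mul_of_nonneg_left (Real.rpow_le_rpow ht.1 ht.2 hα.le) hω.le⟩
    · exact (hφc.integrableOn_uIcc).congr hae
  have hIeq : ∫ t in (0:ℝ)..x, f' t • (G ∘ f) t
      = α * ω ^ a * ∫ t in (0:ℝ)..x, t ^ β * (1 - ω * t ^ α) ^ n := by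
    rw [← intervalIntegral.integral_const_mul]
    apply intervalIntegral.integral_congr_ae
    refine MeasureTheory.ae_of_all _ fun t ht => ?_
    rw [Set.uIoc_of_le hx] at ht
    simpa using hptwise t ht.1
  have hf0 : f 0 = 0 := by simp [hf_def, Real.zero_rpow hα.ne']
  have hmain : α * ω ^ a * (∫ t in (0:ℝ)..x, t ^ β * (1 - ω * t ^ α) ^ n)
      = ∫ s in (0:ℝ)..(ω * x ^ α), s ^ (a-1) * (1-s) ^ n := by
    rw [← hIeq, key, hf0]
  have hc : (0:ℝ) < α * ω ^ a := mul_pos hα (Real.rpow_pos_of_pos hω a)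
  rw [← hmain]
  field_simp

set_option maxHeartbeats 1000000 in
/-- for `β ≥ 0`, `ω > 0`, `α > 0` and `g` with
`((β+α+1)·ln n/(αωn))^{1/α} < g(n) < ω^{-1/α}` for large `n`,
`∫₀^{g(n)} t^β (1-ωt^α)^n dt ∼ (1/(α ω^{(β+1)/α})) Γ((β+1)/α) n^{-(β+1)/α}`. -/
theorem stmt_5 (β ω α : ℝ) (hβ : 0 ≤ β) (hω : 0 < ω) (hα : 0 < α) (g : ℕ → ℝ)
    (hg : ∀ᶠ n : ℕ in atTop,
      ((β + α + 1) * Real.log n / (α * ω * n)) ^ (1 / α) < g n ∧ g n < ω ^ (-(1 / α))) :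
    Tendsto (fun n : ℕ =>
        (∫ t in (0 : ℝ)..g n, t ^ β * (1 - ω * t ^ α) ^ n) /
          (1 / (α * ω ^ ((β + 1) / α)) * Real.Gamma ((β + 1) / α) *
            (n : ℝ) ^ (-((β + 1) / α))))
      atTop (nhds 1) := by
  have ha : 0 < (β+1)/α := div_pos (by linarith) hα
  set a : ℝ := (β + 1) / α with ha_def
  set w : ℝ := ω ^ (-(1/α)) with hw_def
  have hw : 0 < w := Real.rpow_pos_of_pos hω _
  have hwα : ω * w ^ α = 1 := by
    rw [hw_def, ← Real.rpow_mul hω.le, show -(1/α)*α = -1 by field_simp, Real.rpow_neg_one]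
    exact mul_inv_cancel₀ hω.ne'
  have hΓ : 0 < Real.Gamma a := Real.Gamma_pos_of_pos ha
  set c : ℝ := 1 / (α * ω ^ a) * Real.Gamma a with hc_def
  have hc : 0 < c := by
    apply mul_pos _ hΓ
    positivity
  set D : ℕ → ℝ := fun n => c * (n:ℝ) ^ (-a) with hD_def
  set F : ℕ → ℝ := fun n => ∫ t in (0:ℝ)..w, t ^ β * (1 - ω * t ^ α) ^ n with hF_def
  set T : ℕ → ℝ := fun n => ∫ t in (g n)..w, t ^ β * (1 - ω * t ^ α) ^ n with hT_def
  have hcont : ∀ n : ℕ, Continuous (fun t : ℝ => t ^ β * (1 - ω * t ^ α) ^ n) := fun n =>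
    (Real.continuous_rpow_const hβ).mul
      ((continuous_const.sub (continuous_const.mul (Real.continuous_rpow_const hα.le))).pow n)
  -- Step 1 : F n in closed form
  have hFval : ∀ n : ℕ, F n = (1 / (α * ω ^ a)) *
      ((n.factorial : ℝ) / ∏ j ∈ Finset.range (n+1), (a + j)) := by
    intro n
    simp only [hF_def]
    have := substLem_aux β ω α hβ hω hα n w hw.le
    rw [hwα, ← ha_def] at this
    rw [this, betaReal_aux a ha n]
  -- Step 2 : F n / D n → 1
  have hFD : Tendsto (fun n => F n / D n) atTop (nhds 1) := by
    have heq : ∀ᶠ n : ℕ in atTop, Real.GammaSeq a n / Real.Gamma a = F n / D n := by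
      filter_upwards [eventually_ge_atTop 1] with n hn
      have hn0 : (0:ℝ) < (n:ℝ) := by exact_mod_cast hn
      have hna : (0:ℝ) < (n:ℝ) ^ a := Real.rpow_pos_of_pos hn0 a
      rw [hFval n]
      simp only [hD_def, hc_def, Real.GammaSeq]
      rw [Real.rpow_neg hn0.le, mul_div_assoc]
      set E : ℝ := (n.factorial : ℝ) / ∏ j ∈ Finset.range (n+1), (a + (j:ℝ)) with hE_def
      have hαω : (0:ℝ) < ω ^ a := Real.rpow_pos_of_pos hω a
      field_simp
    refine Tendsto.congr' heq ?_
    have := (Real.GammaSeq_tendsto_Gamma a).div_const (Real.Gamma a)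
    rwa [div_self hΓ.ne'] at this
  -- Step 3 : T n / D n → 0
  have hTD : Tendsto (fun n => T n / D n) atTop (nhds 0) := by
    set K : ℝ := w * ω ^ (-(β/α)) with hK_def
    have hK : 0 ≤ K := mul_nonneg hw.le (Real.rpow_nonneg hω.le _)
    have hbound : ∀ᶠ n : ℕ in atTop,
        0 ≤ T n / D n ∧ T n / D n ≤ (K / c) * (n:ℝ)⁻¹ := by
      filter_upwards [hg, eventually_ge_atTop 1] with n hgn hn1
      obtain ⟨hgl, hgu⟩ := hgn
      have hn0 : (0:ℝ) < (n:ℝ) := by exact_mod_cast hn1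
      have hlog : 0 ≤ Real.log n := Real.log_nonneg (by exact_mod_cast hn1)
      set X : ℝ := (β + α + 1) * Real.log n / (α * ω * n) with hX_def
      have hX0 : 0 ≤ X := by
        apply div_nonneg (mul_nonneg (by linarith) hlog)
        positivity
      have hg0 : 0 ≤ g n := le_trans (Real.rpow_nonneg hX0 _) hgl.le
      have hgw : g n ≤ w := hgu.le
      -- X < (g n)^α
      have hXg : X < (g n) ^ α := by
        have h1 : (X ^ (1/α)) ^ α < (g n) ^ α :=
          Real.rpow_lt_rpow (Real.rpow_nonneg hX0 _) hgl hα
        rwa [← Real.rpow_mul hX0, one_div, inv_mul_cancel₀ hα.ne', Real.rpow_one] at h1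
      -- nonnegativity of integrand on [g n, w]
      have hinn : ∀ t ∈ Set.Icc (g n) w, 0 ≤ 1 - ω * t ^ α := by
        intro t ht
        have h1 : t ^ α ≤ w ^ α := Real.rpow_le_rpow (hg0.trans ht.1) ht.2 hα.le
        nlinarith [mul_le_mul_of_nonneg_left h1 hω.le]
      have hT0 : 0 ≤ T n := by
        rw [hT_def]
        apply intervalIntegral.integral_nonneg hgw
        intro t ht
        exact mul_nonneg (Real.rpow_nonneg (hg0.trans ht.1) β) (pow_nonneg (hinn t ht) n)
      -- tail bound
      have hgα1 : 0 ≤ 1 - ω * (g n) ^ α :=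
        hinn (g n) ⟨le_refl _, hgw⟩
      set M : ℝ := ω ^ (-(β/α)) * (1 - ω * (g n) ^ α) ^ n with hM_def
      have hM0 : 0 ≤ M := mul_nonneg (Real.rpow_nonneg hω.le _) (pow_nonneg hgα1 n)
      have hwβ : w ^ β = ω ^ (-(β/α)) := by
        rw [hw_def, ← Real.rpow_mul hω.le]
        ring_nf
      have hTM : T n ≤ (w - g n) * M := by
        have : T n ≤ ∫ _t in (g n)..w, M := by
          rw [hT_def]
          apply intervalIntegral.integral_mono_on hgw ((hcont n).intervalIntegrable _ _)
            (intervalIntegrable_const)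
          intro t ht
          have ht0 : 0 ≤ t := hg0.trans ht.1
          have h1 : t ^ β ≤ ω ^ (-(β/α)) := by
            rw [← hwβ]; exact Real.rpow_le_rpow ht0 ht.2 hβ
          have h2 : (1 - ω * t ^ α) ^ n ≤ (1 - ω * (g n) ^ α) ^ n := by
            apply pow_le_pow_left₀ (hinn t ht)
            have := Real.rpow_le_rpow hg0 ht.1 hα.le
            nlinarith [mul_le_mul_of_nonneg_left this hω.le]
          calc t ^ β * (1 - ω * t ^ α) ^ n
              ≤ ω ^ (-(β/α)) * (1 - ω * (g n) ^ α) ^ n := by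
                apply mul_le_mul h1 h2 (pow_nonneg (hinn t ht) n) (Real.rpow_nonneg hω.le _)
            _ = M := by rw [hM_def]
        rwa [intervalIntegral.integral_const, smul_eq_mul] at this
      -- exponential bound on (1 - ω g^α)^n
      have hexpb : (1 - ω * (g n) ^ α) ^ n ≤ (n:ℝ) ^ (-(a+1)) := by
        have h1 : (1 - ω * (g n) ^ α) ^ n ≤ Real.exp (-(ω * (g n) ^ α)) ^ n := by
          apply pow_le_pow_left₀ hgα1
          linarith [Real.add_one_le_exp (-(ω * (g n) ^ α))]
        have h2 : Real.exp (-(ω * (g n) ^ α)) ^ n = Real.exp ((n:ℝ) * -(ω * (g n) ^ α)) := by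
          rw [← Real.exp_nat_mul]
        have h3 : (a+1) * Real.log n ≤ (n:ℝ) * (ω * (g n) ^ α) := by
          have hXeq : (n:ℝ) * (ω * X) = (a+1) * Real.log n := by
            rw [hX_def, ha_def]
            field_simp
            ring
          have := mul_lt_mul_of_pos_left hXg (mul_pos hn0 hω)
          nlinarith [this]
        have h4 : Real.exp ((n:ℝ) * -(ω * (g n) ^ α)) ≤ Real.exp (-((a+1) * Real.log n)) := by
          apply Real.exp_le_exp.mpr
          nlinarith [h3]
        have h5 : Real.exp (-((a+1) * Real.log n)) = (n:ℝ) ^ (-(a+1)) := by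
          rw [Real.rpow_def_of_pos hn0]
          ring_nf
        calc (1 - ω * (g n) ^ α) ^ n ≤ Real.exp (-(ω * (g n) ^ α)) ^ n := h1
          _ = Real.exp ((n:ℝ) * -(ω * (g n) ^ α)) := h2
          _ ≤ Real.exp (-((a+1) * Real.log n)) := h4
          _ = (n:ℝ) ^ (-(a+1)) := h5
      have hTK : T n ≤ K * (n:ℝ) ^ (-(a+1)) := by
        calc T n ≤ (w - g n) * M := hTM
          _ ≤ w * M := by nlinarith [hM0, hg0]
          _ = w * ω ^ (-(β/α)) * (1 - ω * (g n) ^ α) ^ n := by rw [hM_def]; ring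
          _ ≤ K * (n:ℝ) ^ (-(a+1)) := by
              rw [hK_def]
              apply mul_le_mul_of_nonneg_left hexpb
              positivity
      have hD0 : 0 < D n := mul_pos hc (Real.rpow_pos_of_pos hn0 _)
      constructor
      · exact div_nonneg hT0 hD0.le
      · have hsplit : (n:ℝ) ^ (-(a+1)) = (n:ℝ) ^ (-a) * (n:ℝ)⁻¹ := by
          rw [← Real.rpow_neg_one (n:ℝ), ← Real.rpow_add hn0]
          ring_nf
        rw [div_le_iff₀ hD0]
        calc T n ≤ K * (n:ℝ) ^ (-(a+1)) := hTK
          _ = K / c * (n:ℝ)⁻¹ * D n := by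
              rw [hsplit, hD_def]
              field_simp
    apply squeeze_zero' (hbound.mono fun n h => h.1) (hbound.mono fun n h => h.2)
    have h1 : Tendsto (fun n : ℕ => ((n:ℝ))⁻¹) atTop (nhds 0) :=
      tendsto_inv_atTop_zero.comp tendsto_natCast_atTop_atTop
    simpa using h1.const_mul (K / c)
  -- Step 4 : splitting and conclusion
  have hsplit : ∀ᶠ n : ℕ in atTop,
      (∫ t in (0:ℝ)..g n, t ^ β * (1 - ω * t ^ α) ^ n) / D n = F n / D n - T n / D n := by
    filter_upwards [hg] with n hgn
    have hadd : (∫ t in (0:ℝ)..g n, t ^ β * (1 - ω * t ^ α) ^ n) + T n = F n := by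
      rw [hT_def, hF_def]
      exact intervalIntegral.integral_add_adjacent_intervals
        ((hcont n).intervalIntegrable _ _) ((hcont n).intervalIntegrable _ _)
    rw [← hadd]
    ring
  have hlim : Tendsto (fun n => F n / D n - T n / D n) atTop (nhds 1) := by
    have := hFD.sub hTD
    simpa using this
  exact (hlim.congr' (hsplit.mono fun n h => h.symm))
end
end

section
/- With notation as in the cap-volume setting (convex body K, C² boundary, principal curvatures > 1, graph representation f(z) = ½Q(z) + o(|z|²) near the boundary point x with outer normal u = −e_d), for a fixed direction w ∈ S^{d-2} the radial boundary-intersection radius τ*(w) of ∂K with the sphere S^{d-1} + (1+t)e_d satisfies τ*(w) = sqrt(2/(k(w)−1)) · t^{1/2} + o(t^{1/2}) as t → 0^+, where k(w) = Q(w) is the sectional curvature of ∂K at x in direction w. -/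
open MeasureTheory Metric Set Filter Real Asymptotics
open scoped ENNReal Topology

noncomputable section

/-- in the cap-volume setting (boundary graph `f(z) = ½Q(z) + o(|z|²)` over
the tangent hyperplane, sectional curvature `k(w) = Q(w) > 1`), for a fixed tangent unit
direction `w` the radial intersection radius `τ*(w)(t)` of `∂K` with the sphere
`S^{d-1} + (1+t)e_d` (the small positive solution of `f(τw) = 1 + t − √(1−τ²)`) satisfies
`τ*(w)(t) = √(2/(k(w)−1))·t^{1/2} + o(t^{1/2})` as `t → 0⁺`, here expressed as
`τ*(w)(t)/√t → √(2/(Q(w)−1))`. -/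
theorem stmt_10 (d : ℕ) (hd : 2 ≤ d)
    (κ : Fin (d - 1) → ℝ) (hκ : ∀ i, 1 < κ i)
    (Q : EuclideanSpace ℝ (Fin d) → ℝ)
    (hQ : ∀ w, Q w = ∑ i : Fin (d - 1), κ i * (w (Fin.castLE (Nat.sub_le d 1) i)) ^ 2)
    (f : EuclideanSpace ℝ (Fin d) → ℝ)
    (hfQ : (fun w => f w - Q w / 2)
      =o[𝓝[{w : EuclideanSpace ℝ (Fin d) | w ⟨d - 1, by omega⟩ = 0}] 0] fun w => ‖w‖ ^ 2)
    (w : EuclideanSpace ℝ (Fin d)) (hw : ‖w‖ = 1) (hwT : w ⟨d - 1, by omega⟩ = 0)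
    (τ : ℝ → ℝ)
    (hτpos : ∀ᶠ t in 𝓝[>] (0 : ℝ), 0 < τ t)
    (hτ0 : Tendsto τ (𝓝[>] (0 : ℝ)) (𝓝 0))
    -- `τ(t)` solves `f(τ(t)·w) = 1 + t − √(1 − τ(t)²)`:
    (hτeq : ∀ᶠ t in 𝓝[>] (0 : ℝ), f (τ t • w) = 1 + t - Real.sqrt (1 - (τ t) ^ 2)) :
    Tendsto (fun t => τ t / Real.sqrt t) (𝓝[>] (0 : ℝ))
      (𝓝 (Real.sqrt (2 / (Q w - 1)))) := by

  set l := 𝓝[>] (0:ℝ) with hl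
  set k := Q w with hk_def
  -- sum of squares of tangent coordinates is 1
  have hsum1 : ∑ j : Fin d, (w j)^2 = 1 := by
    have h := EuclideanSpace.norm_eq w
    rw [hw] at h
    have h2 : Real.sqrt (∑ j : Fin d, (w j)^2) = 1 := by
      rw [show (∑ j : Fin d, (w j)^2) = ∑ j : Fin d, ‖w j‖^2 from by
        simp [Real.norm_eq_abs, sq_abs]]
      exact h.symm
    exact Real.sqrt_eq_one.mp h2
  have hsplit : ∑ j : Fin d, (w j)^2
      = (∑ i : Fin (d-1), (w (Fin.castLE (Nat.sub_le d 1) i))^2) + (w ⟨d-1, by omega⟩)^2 := by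
    have he : d - 1 + 1 = d := by omega
    rw [← Fintype.sum_equiv (finCongr he) (fun j => (w (finCongr he j))^2) (fun j => (w j)^2)
      (fun j => rfl)]
    rw [Fin.sum_univ_castSucc]
    rfl
  have hsum : ∑ i : Fin (d-1), (w (Fin.castLE (Nat.sub_le d 1) i))^2 = 1 := by
    rw [hsplit, hwT] at hsum1; simpa using hsum1
  have hk1 : 1 < k := by
    rw [hk_def, hQ]
    obtain ⟨i0, hi0⟩ : ∃ i, 0 < (w (Fin.castLE (Nat.sub_le d 1) i))^2 := by
      by_contra hcon; push_neg at hcon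
      have hz : ∀ i ∈ Finset.univ, (w (Fin.castLE (Nat.sub_le d 1) i))^2 = 0 :=
        fun i _ => le_antisymm (hcon i) (sq_nonneg _)
      rw [Finset.sum_eq_zero hz] at hsum; norm_num at hsum
    calc (1:ℝ) = ∑ i : Fin (d-1), (w (Fin.castLE (Nat.sub_le d 1) i))^2 := hsum.symm
      _ < ∑ i : Fin (d-1), κ i * (w (Fin.castLE (Nat.sub_le d 1) i))^2 := by
          refine Finset.sum_lt_sum (fun i _ => ?_) ⟨i0, Finset.mem_univ _, ?_⟩
          · nlinarith [hκ i, sq_nonneg (w (Fin.castLE (Nat.sub_le d 1) i))]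
          · nlinarith [hκ i0]
  have hkpos : (0:ℝ) < k - 1 := by linarith
  -- compose the little-o along the path t ↦ τ t • w
  have htend : Tendsto (fun t => τ t • w) l
      (𝓝[{v : EuclideanSpace ℝ (Fin d) | v ⟨d - 1, by omega⟩ = 0}] 0) := by
    apply tendsto_nhdsWithin_of_tendsto_nhds_of_eventually_within
    · have := hτ0.smul_const w
      rwa [zero_smul] at this
    · refine Eventually.of_forall fun t => ?_
      show (τ t • w) ⟨d - 1, by omega⟩ = 0
      have : (τ t • w) ⟨d - 1, by omega⟩ = τ t * w ⟨d - 1, by omega⟩ := rfl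
      rw [this, hwT, mul_zero]
  have hQs : ∀ c : ℝ, Q (c • w) = c^2 * k := by
    intro c
    rw [hk_def, hQ, hQ, Finset.mul_sum]
    refine Finset.sum_congr rfl fun i _ => ?_
    have : (c • w) (Fin.castLE (Nat.sub_le d 1) i) = c * w (Fin.castLE (Nat.sub_le d 1) i) := rfl
    rw [this]; ring
  have ho := hfQ.comp_tendsto htend
  have ho' : (fun t => f (τ t • w) - (τ t)^2 * k / 2) =o[l] fun t => (τ t)^2 := by
    refine (ho.congr' ?_ ?_)
    · refine Eventually.of_forall fun t => ?_
      simp only [Function.comp]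
      rw [hQs]
    · refine Eventually.of_forall fun t => ?_
      simp only [Function.comp]
      rw [norm_smul, hw, mul_one, Real.norm_eq_abs, sq_abs]
  have hdiv : Tendsto (fun t => (f (τ t • w) - (τ t)^2 * k / 2) / (τ t)^2) l (𝓝 0) :=
    ho'.tendsto_div_nhds_zero
  have hτ1 : ∀ᶠ t in l, τ t < 1 := hτ0.eventually_lt_const one_pos
  have hkey : ∀ᶠ t in l, t / (τ t)^2
      = (k/2 - 1/(1 + Real.sqrt (1 - (τ t)^2)))
        + (f (τ t • w) - (τ t)^2 * k / 2) / (τ t)^2 := by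
    filter_upwards [hτpos, hτ1, hτeq] with t h1 h2 h3
    set s := τ t with hs
    have hs2 : (0:ℝ) ≤ 1 - s^2 := by nlinarith
    have hu : Real.sqrt (1 - s^2) ^ 2 = 1 - s^2 := Real.sq_sqrt hs2
    have hu0 : 0 ≤ Real.sqrt (1 - s^2) := Real.sqrt_nonneg _
    have hup : (0:ℝ) < 1 + Real.sqrt (1 - s^2) := by linarith
    have hs0 : s^2 ≠ 0 := by positivity
    rw [h3]
    field_simp
    nlinarith [hu, sq_nonneg s]
  have hlim0 : Tendsto (fun t => Real.sqrt (1 - (τ t)^2)) l (𝓝 1) := by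
    have h1 : Tendsto (fun t => 1 - (τ t)^2) l (𝓝 (1 - 0^2)) :=
      tendsto_const_nhds.sub (hτ0.pow 2)
    have h2 := (Real.continuous_sqrt.tendsto (1 - 0^2)).comp h1
    simpa [Function.comp_def] using h2
  have hlim1 : Tendsto (fun t => t / (τ t)^2) l (𝓝 ((k-1)/2)) := by
    have h2 : Tendsto (fun t => (k/2 - 1/(1 + Real.sqrt (1 - (τ t)^2)))
        + (f (τ t • w) - (τ t)^2 * k / 2) / (τ t)^2) l (𝓝 ((k/2 - 1/(1+1)) + 0)) := by
      refine Tendsto.add (tendsto_const_nhds.sub ?_) hdiv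
      exact tendsto_const_nhds.div (tendsto_const_nhds.add hlim0) (by norm_num)
    have h3 : (k/2 - 1/(1+1) : ℝ) + 0 = (k-1)/2 := by norm_num; ring
    rw [h3] at h2
    exact h2.congr' (hkey.mono fun t ht => ht.symm)
  have hlim2 : Tendsto (fun t => (τ t)^2 / t) l (𝓝 (2/(k-1))) := by
    have hne : ((k-1)/2 : ℝ) ≠ 0 := by positivity
    have := hlim1.inv₀ hne
    simp only [inv_div] at this
    exact this
  have hfin : ∀ᶠ t in l, Real.sqrt ((τ t)^2 / t) = τ t / Real.sqrt t := by
    filter_upwards [hτpos] with t h1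
    rw [Real.sqrt_div (sq_nonneg _), Real.sqrt_sq h1.le]
  have hfinal := (Real.continuous_sqrt.tendsto (2/(k-1))).comp hlim2
  exact hfinal.congr' hfin


end
end

section
/- (Jacobian of the cap parametrization) Let K ⊂ ℝ^d be a convex body with C²_+ boundary, and let r ≥ R_K where R_K is the smallest radius such that K slides freely in a ball of radius R_K. Define Φ_r : S^{d-1} × ℝ_+ → ℝ^d by Φ_r(u,t) = σ_K^{-1}(u) − (r+t)u. Then the Jacobian of Φ_r at (u,t) equals |Σ_{i=0}^{d-1} (−1)^i C(d−1,i) s_{d−1−i}(u) (r+t)^i|, where s_j(u) = C(d−1,j)^{-1} Σ_{1≤i_1<⋯<i_j≤d−1} r_{i_1}(u)⋯r_{i_j}(u) are the normalized elementary symmetric functions of the principal radii of curvature r_1(u),…,r_{d-1}(u) of ∂K at σ_K^{-1}(u) (with s_0 = 1). -/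
open MeasureTheory Metric Set Filter Pointwise

noncomputable section

/-- Jacobian of the cap parametrization `Φ_r(u,t) = σ_K⁻¹(u) − (r+t)u`:
let `K` be a convex body with C²₊ boundary, `x = σ_K⁻¹` its inverse Gauss map (so `x w`
is the boundary point with outer unit normal `w`), `r ≥ R_K`, and fix `u ∈ S^{d-1}`.
Let `v₁,…,v_{d-1}` be orthonormal principal directions at `u`, i.e. `Dx(vⱼ) = radⱼ • vⱼ`
where `rad j = r_j(u) > 0` are the principal radii of curvature, and let `M` be the
matrix of the differential of `Φ_r` at `(u,t)` in the orthonormal tangent basis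
`(v₁,…,v_{d-1}, ∂/∂t)` (with columns `Dx(vⱼ) − (r+t)vⱼ` and `−u`). Then
`|det M| = |Σ_{i=0}^{d-1} (−1)^i C(d−1,i) s_{d−1−i}(u) (r+t)^i|` with `s_j` the
normalized elementary symmetric functions of the principal radii. -/
theorem stmt_12 (d : ℕ) (hd : 2 ≤ d) (K : Set (EuclideanSpace ℝ (Fin d)))
    (hKcomp : IsCompact K) (hKconv : Convex ℝ K) (hKint : (interior K).Nonempty)
    (F : EuclideanSpace ℝ (Fin d) → ℝ) (hF : ContDiff ℝ 2 F)
    (hFK : K = {x | F x ≤ 0}) (hFgrad : ∀ x ∈ frontier K, fderiv ℝ F x ≠ 0)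
    (R r t : ℝ) (hR0 : 0 < R) (hrR : R ≤ r) (ht : 0 ≤ t)
    -- `K` slides freely in a ball of radius `R` (so `r ≥ R ≥ R_K`):
    (hslide : ∀ c : EuclideanSpace ℝ (Fin d), ∀ y ∈ sphere c R,
      ∃ v : EuclideanSpace ℝ (Fin d), y ∈ v +ᵥ K ∧ v +ᵥ K ⊆ closedBall c R)
    -- `x` is the inverse Gauss map `σ_K⁻¹`:
    (x : EuclideanSpace ℝ (Fin d) → EuclideanSpace ℝ (Fin d))
    (hx : ∀ w ∈ sphere (0 : EuclideanSpace ℝ (Fin d)) 1,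
      x w ∈ frontier K ∧ ∀ y ∈ K, inner ℝ (y - x w) w ≤ (0 : ℝ))
    (u : EuclideanSpace ℝ (Fin d)) (hu : u ∈ sphere (0 : EuclideanSpace ℝ (Fin d)) 1)
    (Dx : EuclideanSpace ℝ (Fin d) →L[ℝ] EuclideanSpace ℝ (Fin d))
    (hDx : HasFDerivAt x Dx u)
    (v : Fin (d - 1) → EuclideanSpace ℝ (Fin d)) (hv : Orthonormal ℝ v)
    (hvu : ∀ j, inner ℝ u (v j) = (0 : ℝ))
    (rad : Fin (d - 1) → ℝ) (hrad : ∀ j, 0 < rad j)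
    -- the `v j` are principal directions with principal radii of curvature `rad j`:
    (hprin : ∀ j, Dx (v j) = rad j • v j)
    (M : Matrix (Fin d) (Fin (d - 1) ⊕ Unit) ℝ)
    (hMv : ∀ k j, M k (Sum.inl j) = (Dx (v j) - (r + t) • v j) k)
    (hMt : ∀ k, M k (Sum.inr ()) = (-u) k)
    (e : Fin d ≃ (Fin (d - 1) ⊕ Unit)) :
    |(M.submatrix id e).det| =
      |∑ i ∈ Finset.range d, (-1 : ℝ) ^ i * ((d - 1).choose i : ℝ) *
          ((((d - 1).choose (d - 1 - i) : ℝ))⁻¹ *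
            ∑ A ∈ Finset.powersetCard (d - 1 - i) (Finset.univ : Finset (Fin (d - 1))),
              ∏ j ∈ A, rad j) *
          (r + t) ^ i| := by
  classical
  set X := r + t with hXdef
  set b : (Fin (d-1) ⊕ Unit) → EuclideanSpace ℝ (Fin d) := Sum.elim v (fun _ => u) with hb
  have hvv := orthonormal_iff_ite.mp hv
  have hbon : ∀ s s', (inner ℝ (b s) (b s') : ℝ) = if s = s' then 1 else 0 := by
    rintro (j | s) (j' | s')
    · simp only [hb, Sum.elim_inl, hvv j j', Sum.inl.injEq]
    · simp only [hb, Sum.elim_inl, Sum.elim_inr]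
      rw [real_inner_comm, hvu j]
      simp
    · simp only [hb, Sum.elim_inl, Sum.elim_inr, hvu j']
      simp
    · have hu1 : ‖u‖ = 1 := by simpa using hu
      have hss : (Sum.inr s : Fin (d-1) ⊕ Unit) = Sum.inr s' := by cases s; cases s'; rfl
      rw [if_pos hss]
      simp only [hb, Sum.elim_inr]
      rw [real_inner_self_eq_norm_sq, hu1]
      norm_num
  set g : (Fin (d-1) ⊕ Unit) → ℝ := Sum.elim (fun j => rad j - X) (fun _ => -1) with hg
  set N : Matrix (Fin (d-1) ⊕ Unit) (Fin (d-1) ⊕ Unit) ℝ :=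
    fun s s' => b s' (e.symm s) with hN
  have hM : M.submatrix e.symm id = N * Matrix.diagonal g := by
    ext s s'
    rw [Matrix.mul_diagonal]
    rcases s' with j | ⟨⟩
    · simp only [Matrix.submatrix_apply, id_eq, hMv, hprin, hN, hg, hb, Sum.elim_inl]
      simp only [PiLp.sub_apply, PiLp.smul_apply, smul_eq_mul, ← hXdef]
      ring
    · simp only [Matrix.submatrix_apply, id_eq, hMt, hN, hg, hb, Sum.elim_inr]
      simp [PiLp.neg_apply]
  have hNtN : N.transpose * N = 1 := by
    ext s s'
    simp only [Matrix.mul_apply, Matrix.transpose_apply, Matrix.one_apply]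
    simp only [hN]
    have h1 : ∑ k, b s (e.symm k) * b s' (e.symm k) = ∑ k, b s k * b s' k :=
      Equiv.sum_comp e.symm (fun k => b s k * b s' k)
    rw [h1, ← hbon s s', PiLp.inner_apply]
    simp [RCLike.inner_apply, mul_comm]
  have hdetN : |N.det| = 1 := by
    have h1 : N.det * N.det = 1 := by
      have h2 := congrArg Matrix.det hNtN
      rwa [Matrix.det_mul, Matrix.det_transpose, Matrix.det_one] at h2
    rcases mul_self_eq_one_iff.mp h1 with h | h <;> simp [h]
  have hdet : |(M.submatrix id e).det| = |∏ j, (rad j - X)| := by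
    have h0 : (M.submatrix id e).det = (M.submatrix e.symm id).det := by
      rw [← Matrix.det_submatrix_equiv_self e (M.submatrix e.symm id)]
      congr 1
      ext k k'
      simp
    rw [h0, hM, Matrix.det_mul, Matrix.det_diagonal, abs_mul, hdetN, one_mul,
      Fintype.prod_sum_type]
    simp [hg, abs_mul]
  rw [hdet]
  congr 1
  -- Now the algebraic identity
  have hd1 : d - 1 + 1 = d := by omega
  have hcardU : (Finset.univ : Finset (Fin (d-1))).card = d - 1 := by simp
  have hterm : ∀ i ∈ Finset.range d,
      (-1 : ℝ) ^ i * ((d - 1).choose i : ℝ) *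
          ((((d - 1).choose (d - 1 - i) : ℝ))⁻¹ *
            ∑ A ∈ Finset.powersetCard (d - 1 - i) (Finset.univ : Finset (Fin (d - 1))),
              ∏ j ∈ A, rad j) * X ^ i
      = (-1 : ℝ) ^ i *
          (∑ A ∈ Finset.powersetCard (d - 1 - i) (Finset.univ : Finset (Fin (d - 1))),
              ∏ j ∈ A, rad j) * X ^ i := by
    intro i hi
    have hile : i ≤ d - 1 := by
      have := Finset.mem_range.mp hi; omega
    have hsym : (d - 1).choose (d - 1 - i) = (d - 1).choose i := Nat.choose_symm hile
    have hpos : ((d - 1).choose i : ℝ) ≠ 0 := by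
      exact_mod_cast (Nat.choose_pos hile).ne'
    rw [hsym]
    field_simp
  rw [Finset.sum_congr rfl hterm]
  -- product expansion
  have hprod : ∏ j : Fin (d-1), (rad j - X)
      = ∑ i ∈ Finset.range d, (-1 : ℝ) ^ i *
          (∑ A ∈ Finset.powersetCard (d - 1 - i) (Finset.univ : Finset (Fin (d - 1))),
              ∏ j ∈ A, rad j) * X ^ i := by
    have h1 : ∀ j : Fin (d-1), rad j - X = rad j + (-X) := by intro j; ring
    calc ∏ j : Fin (d-1), (rad j - X)
        = ∏ j : Fin (d-1), (rad j + (-X)) := by simp_rw [h1]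
      _ = ∑ A ∈ (Finset.univ : Finset (Fin (d-1))).powerset,
            (∏ j ∈ A, rad j) * ∏ _j ∈ (Finset.univ : Finset (Fin (d-1))) \ A, (-X) :=
          Finset.prod_add _ _ _
      _ = ∑ k ∈ Finset.range (d - 1 + 1),
            ∑ A ∈ Finset.powersetCard k (Finset.univ : Finset (Fin (d-1))),
              (∏ j ∈ A, rad j) * (-X) ^ (d - 1 - k) := by
          rw [Finset.sum_powerset, hcardU]
          refine Finset.sum_congr rfl fun k hk => Finset.sum_congr rfl fun A hA => ?_
          have hAk := (Finset.mem_powersetCard.mp hA).2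
          rw [Finset.prod_const]
          congr 1
          rw [Finset.card_sdiff_of_subset (Finset.subset_univ A), hcardU, hAk]
      _ = ∑ i ∈ Finset.range (d - 1 + 1),
            ∑ A ∈ Finset.powersetCard (d - 1 - i) (Finset.univ : Finset (Fin (d-1))),
              (∏ j ∈ A, rad j) * (-X) ^ (d - 1 - (d - 1 - i)) := by
          exact (Finset.sum_range_reflect _ _).symm
      _ = ∑ i ∈ Finset.range d, (-1 : ℝ) ^ i *
            (∑ A ∈ Finset.powersetCard (d - 1 - i) (Finset.univ : Finset (Fin (d - 1))),
              ∏ j ∈ A, rad j) * X ^ i := by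
          rw [hd1]
          refine Finset.sum_congr rfl fun i hi => ?_
          have hile : i ≤ d - 1 := by have := Finset.mem_range.mp hi; omega
          rw [Nat.sub_sub_self hile, ← Finset.sum_mul, neg_pow]
          ring
  rw [← hprod]

end
end

section
/- (Block-determinant identity underlying the Jacobian computation) Let u_1, …, u_d ∈ S^{d-1} ⊂ ℝ^d, and for each i let (u_i, U̇_i) be an orthogonal d×d matrix where U̇_i is a d×(d−1) matrix (so U̇_i^T u_i = 0, U̇_i^T U̇_i = I_{d-1}, and I_d − U̇_i U̇_i^T = u_i u_i^T). Then det of the block matrix with rows (I_d, U̇_1, 0, …, 0), (I_d, 0, U̇_2, …, 0), …, (I_d, 0, …, 0, U̇_d) squared equals det(Σ_{i=1}^d u_i u_i^T) = (det(u_1 … u_d))² = ∇_d(u_1,…,u_d)². -/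
open MeasureTheory Metric Set Filter
open Matrix

noncomputable section

/-- the block-determinant identity underlying the Blaschke–Petkantschin type
Jacobian computation. Here `U i` plays the role of `U̇_i` (its columns form an orthonormal
basis of the tangent space of the sphere at `u i`), and `B` is the d²×d² block matrix with
block rows `(I_d, 0, …, U̇_i, …, 0)`. Then `det(B)² = det(Σ uᵢuᵢᵀ) = det(u₁ ⋯ u_d)²`. -/
theorem stmt_18 (d : ℕ) (hd : 1 ≤ d)
    (u : Fin d → EuclideanSpace ℝ (Fin d)) (hu : ∀ i, ‖u i‖ = 1)
    (U : Fin d → Matrix (Fin d) (Fin (d - 1)) ℝ)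
    -- `U̇_iᵀ u_i = 0`
    (hUu : ∀ i, (U i).transpose.mulVec (fun k => u i k) = 0)
    -- `U̇_iᵀ U̇_i = I_{d-1}`
    (hUorth : ∀ i, (U i).transpose * (U i) = 1)
    -- `I_d − U̇_i U̇_iᵀ = u_i u_iᵀ`
    (hUcompl : ∀ i, (1 : Matrix (Fin d) (Fin d) ℝ) - U i * (U i).transpose =
      Matrix.of fun k l => u i k * u i l)
    (B : Matrix (Fin d × Fin d) (Fin d ⊕ (Fin d × Fin (d - 1))) ℝ)
    (hB1 : ∀ i k j, B (i, k) (Sum.inl j) = if k = j then 1 else 0)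
    (hB2 : ∀ i k i' j, B (i, k) (Sum.inr (i', j)) = if i = i' then U i k j else 0)
    (e : (Fin d × Fin d) ≃ (Fin d ⊕ (Fin d × Fin (d - 1)))) :
    ((B.submatrix id e).det) ^ 2 =
        (∑ i, (Matrix.of fun k l => u i k * u i l : Matrix (Fin d) (Fin d) ℝ)).det ∧
      (∑ i, (Matrix.of fun k l => u i k * u i l : Matrix (Fin d) (Fin d) ℝ)).det =
        ((Matrix.of fun k i => u i k).det) ^ 2 := by
  constructor
  · have hdet2 : (B.submatrix id e).det ^ 2 = ((B.submatrix id e)ᵀ * (B.submatrix id e)).det := by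
      rw [Matrix.det_mul, Matrix.det_transpose, sq]
    rw [hdet2]
    have h1 : (B.submatrix id e)ᵀ * (B.submatrix id e) = (Bᵀ * B).submatrix e e := by
      ext a b
      simp [Matrix.mul_apply, Matrix.transpose_apply]
    rw [h1, Matrix.det_submatrix_equiv_self]
    have h2 : Bᵀ * B = Matrix.fromBlocks ((d : ℝ) • 1)
        (Matrix.of fun j (p : Fin d × Fin (d - 1)) => U p.1 j p.2)
        (Matrix.of fun (p : Fin d × Fin (d - 1)) j => U p.1 j p.2) 1 := by
      ext a b
      cases a with
      | inl j =>
        cases b with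
        | inl j' =>
          simp only [Matrix.mul_apply, Matrix.transpose_apply, Fintype.sum_prod_type,
            Matrix.fromBlocks_apply₁₁]
          simp [hB1, Finset.sum_ite_eq, Matrix.one_apply, ite_and, Finset.sum_comm, eq_comm]
        | inr p =>
          obtain ⟨i', j'⟩ := p
          simp only [Matrix.mul_apply, Matrix.transpose_apply, Fintype.sum_prod_type,
            Matrix.fromBlocks_apply₁₂]
          simp [hB1, hB2, Finset.sum_ite_eq, ite_and]
      | inr p =>
        obtain ⟨i'', j''⟩ := p
        cases b with
        | inl j' =>
          simp only [Matrix.mul_apply, Matrix.transpose_apply, Fintype.sum_prod_type,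
            Matrix.fromBlocks_apply₂₁]
          simp [hB1, hB2, Finset.sum_ite_eq, ite_and]
        | inr p' =>
          obtain ⟨i', j'⟩ := p'
          have := hUorth i'
          simp only [Matrix.mul_apply, Matrix.transpose_apply, Fintype.sum_prod_type,
            Matrix.fromBlocks_apply₂₂]
          rw [Finset.sum_comm]
          simp only [hB2, ite_mul, mul_ite, zero_mul, mul_zero]
          by_cases h : i'' = i'
          · subst h
            have h3 := congrFun (congrFun (hUorth i'') j'') j'
            simp only [Matrix.mul_apply, Matrix.transpose_apply] at h3
            simp [Finset.sum_ite_eq', h3, Matrix.one_apply, Prod.ext_iff]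
          · simp only [Matrix.one_apply, Prod.mk.injEq]
            rw [if_neg (by simp [h])]
            apply Finset.sum_eq_zero; intro k _
            apply Finset.sum_eq_zero; intro i _
            by_cases h1 : i = i''
            · subst h1; simp [h]
            · simp [h1]
    rw [h2, Matrix.det_fromBlocks_one₂₂]
    congr 1
    ext k l
    have hsum : (Matrix.of (fun j (p : Fin d × Fin (d - 1)) => U p.1 j p.2) *
        Matrix.of fun (p : Fin d × Fin (d - 1)) j => U p.1 j p.2) k l
        = ∑ i, (U i * (U i)ᵀ) k l := by
      simp [Matrix.mul_apply, Fintype.sum_prod_type, Matrix.transpose_apply]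
    rw [Matrix.sub_apply, hsum, Matrix.sum_apply]
    have : ∀ i : Fin d, (U i * (U i)ᵀ) k l = (1 : Matrix (Fin d) (Fin d) ℝ) k l - u i k * u i l := by
      intro i
      have h4 := congrFun (congrFun (hUcompl i) k) l
      simp only [Matrix.sub_apply, Matrix.of_apply] at h4
      linarith
    simp only [this, Finset.sum_sub_distrib]
    simp [Matrix.one_apply, Matrix.smul_apply]
  · have h5 : (∑ i, (Matrix.of fun k l => u i k * u i l : Matrix (Fin d) (Fin d) ℝ))
        = (Matrix.of fun k i => u i k) * (Matrix.of fun k i => u i k)ᵀ := by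
      ext k l
      simp [Matrix.mul_apply, Matrix.sum_apply, Matrix.transpose_apply]
    rw [h5, Matrix.det_mul, Matrix.det_transpose, sq]

end
end

section
/- (Hyperconvex position can fail for d ≥ 3) For d ≥ 3 and a 1-hyperconvex body K ⊂ ℝ^d with nonempty interior, there exist points x_1, …, x_d ∈ K that are not in hyperconvex position, i.e. no translate of the unit sphere S^{d-1} passes through all of them; for example, d points where one lies in the interior of the 1-spindle of two others. Moreover for d = 2, any two points of a 1-hyperconvex body are always in hyperconvex position, so the probability η_2(K) that 2 i.i.d. uniform points are in hyperconvex position equals 1, while 0 < η_d(K) < 1 for d ≥ 3. -/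
open MeasureTheory Metric Set Filter
open scoped ENNReal

noncomputable section

open scoped RealInnerProductSpace Topology

lemma exists_unit_orthogonal {d : ℕ} (hd : 2 ≤ d) (v : EuclideanSpace ℝ (Fin d)) :
    ∃ w : EuclideanSpace ℝ (Fin d), ‖w‖ = 1 ∧ ⟪v, w⟫ = 0 := by
  rcases eq_or_ne v 0 with h | h
  · refine ⟨EuclideanSpace.single ⟨0, by omega⟩ 1, by simp [EuclideanSpace.norm_single], by simp [h]⟩
  · have hfr : 0 < Module.finrank ℝ ((ℝ ∙ v)ᗮ : Submodule ℝ (EuclideanSpace ℝ (Fin d))) := by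
      have h1 : Module.finrank ℝ (ℝ ∙ v) = 1 := finrank_span_singleton h
      have h2 := Submodule.finrank_add_finrank_orthogonal (𝕜 := ℝ) (ℝ ∙ v)
      have h3 : Module.finrank ℝ (EuclideanSpace ℝ (Fin d)) = d := by simp
      omega
    obtain ⟨w, hw⟩ := Module.finrank_pos_iff_exists_ne_zero.mp hfr
    refine ⟨‖(w : EuclideanSpace ℝ (Fin d))‖⁻¹ • (w : EuclideanSpace ℝ (Fin d)), ?_, ?_⟩
    · have : (w : EuclideanSpace ℝ (Fin d)) ≠ 0 := Submodule.coe_eq_zero.not.mpr hw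
      simp [norm_smul, abs_of_nonneg, inv_mul_cancel₀ (norm_ne_zero_iff.mpr this)]
    · have hmem := w.2
      have : ⟪v, (w : EuclideanSpace ℝ (Fin d))⟫ = 0 := by
        have := (Submodule.mem_orthogonal (ℝ ∙ v) w).mp hmem v (Submodule.mem_span_singleton_self v)
        simpa [real_inner_comm] using this
      simp [inner_smul_right, this]

lemma two_pt {d : ℕ} (hd : 2 ≤ d) (x y : EuclideanSpace ℝ (Fin d)) (h2 : dist x y ≤ 2) :
    ∃ p, x ∈ sphere p 1 ∧ y ∈ sphere p 1 := by
  obtain ⟨w, hw1, hw0⟩ := exists_unit_orthogonal hd (y - x)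
  set m := midpoint ℝ x y
  set r : ℝ := ‖y - x‖ / 2
  have hr0 : 0 ≤ r := by positivity
  have hr1 : r ≤ 1 := by
    have : ‖y - x‖ ≤ 2 := by rw [← dist_eq_norm]; rwa [dist_comm]
    simp only [r]; linarith
  set t : ℝ := Real.sqrt (1 - r ^ 2)
  have ht : t ^ 2 = 1 - r ^ 2 := Real.sq_sqrt (by nlinarith)
  refine ⟨m + t • w, ?_, ?_⟩
  · rw [mem_sphere_iff_norm]
    have hx : x - (m + t • w) = (-(1/2 : ℝ)) • (y - x) - t • w := by
      have hm : m = (2⁻¹:ℝ) • (x + y) := by simp only [m]; rw [midpoint_eq_smul_add, invOf_eq_inv]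
      rw [hm]; module
    have hsq : ‖x - (m + t • w)‖ ^ 2 = 1 := by
      rw [hx, norm_sub_sq_real]
      rw [inner_smul_left, inner_smul_right, hw0]
      simp only [norm_smul, mul_pow]
      rw [hw1]
      have : ‖y - x‖ = 2 * r := by simp [r]; ring
      rw [this]
      simp only [norm_neg, Real.norm_eq_abs]
      rw [abs_of_nonneg (by norm_num : (0:ℝ) ≤ 1/2), abs_of_nonneg (Real.sqrt_nonneg _)]
      nlinarith [ht]
    nlinarith [norm_nonneg (x - (m + t • w)), hsq]
  · rw [mem_sphere_iff_norm]
    have hy : y - (m + t • w) = ((1/2 : ℝ)) • (y - x) - t • w := by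
      have hm : m = (2⁻¹:ℝ) • (x + y) := by simp only [m]; rw [midpoint_eq_smul_add, invOf_eq_inv]
      rw [hm]; module
    have hsq : ‖y - (m + t • w)‖ ^ 2 = 1 := by
      rw [hy, norm_sub_sq_real]
      rw [inner_smul_left, inner_smul_right, hw0]
      simp only [norm_smul, mul_pow]
      rw [hw1]
      have : ‖y - x‖ = 2 * r := by simp [r]; ring
      rw [this]
      simp only [Real.norm_eq_abs]
      rw [abs_of_nonneg (by norm_num : (0:ℝ) ≤ 1/2), abs_of_nonneg (Real.sqrt_nonneg _)]
      nlinarith [ht]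
    nlinarith [norm_nonneg (y - (m + t • w)), hsq]

set_option maxHeartbeats 1000000 in
lemma quant {W : Type*} [NormedAddCommGroup W] [InnerProductSpace ℝ W]
    (a b m a' b' m' p : W) (r η : ℝ)
    (hη0 : 0 < η) (hη1 : 4 * η ≤ r) (hη2 : η ≤ 1 / 2) (hη3 : 65 * η ≤ r ^ 2)
    (hab : ‖a - b‖ = r) (hm : m = midpoint ℝ a b)
    (ha : ‖a' - a‖ < η) (hb : ‖b' - b‖ < η) (hmm : ‖m' - m‖ < η)
    (hpa : ‖a' - p‖ = 1) (hpb : ‖b' - p‖ = 1) (hpm : ‖m' - p‖ = 1) : False := by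
  set u := a' - p
  set v := b' - p
  -- parallelogram
  have hpar : ‖u + v‖ ^ 2 + ‖u - v‖ ^ 2 = 4 := by
    have := parallelogram_law_with_norm ℝ u v
    nlinarith [this, hpa, hpb]
  have huv : u - v = a' - b' := by simp only [u, v]; abel
  have hw : r - 2 * η ≤ ‖u - v‖ := by
    rw [huv]
    have h1 : ‖a - b‖ ≤ ‖a - a'‖ + ‖a' - b'‖ + ‖b' - b‖ := by
      have := norm_add_le (a - a') (a' - b')
      have h2 := norm_add_le ((a - a') + (a' - b')) (b' - b)
      calc ‖a - b‖ = ‖(a - a') + (a' - b') + (b' - b)‖ := by abel_nf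
        _ ≤ _ := le_trans h2 (by linarith)
    have h3 : ‖a - a'‖ < η := by rwa [norm_sub_rev]
    linarith [hab ▸ h1]
  -- m' - p close to (u+v)/2
  have hkey : ‖u + v - (2:ℝ) • (m' - p)‖ ≤ 4 * η := by
    have he : u + v - (2:ℝ) • (m' - p) = (a' - a) + (b' - b) + (2:ℝ) • (m - m') := by
      simp only [u, v, hm, midpoint_eq_smul_add, invOf_eq_inv]
      module
    rw [he]
    calc ‖(a' - a) + (b' - b) + (2:ℝ) • (m - m')‖
        ≤ ‖(a' - a) + (b' - b)‖ + ‖(2:ℝ) • (m - m')‖ := norm_add_le _ _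
      _ ≤ ‖a' - a‖ + ‖b' - b‖ + 2 * ‖m - m'‖ := by
          rw [norm_smul]
          simp only [Real.norm_ofNat]
          gcongr
          exact norm_add_le _ _
      _ ≤ 4 * η := by
          have : ‖m - m'‖ < η := by rwa [norm_sub_rev]
          linarith
  have h2mp : ‖(2:ℝ) • (m' - p)‖ = 2 := by rw [norm_smul, hpm]; norm_num
  have hlb : 2 - 4 * η ≤ ‖u + v‖ := by
    have := norm_sub_norm_le (u + v) ((2:ℝ) • (m' - p))
    have h := abs_le.mp (abs_norm_sub_norm_le (u + v) ((2:ℝ) • (m' - p)))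
    linarith [h.1, hkey, h2mp.ge, h2mp.le]
  have huvnn : 0 ≤ ‖u - v‖ := norm_nonneg _
  have h4 : (2 - 4*η)^2 ≤ ‖u + v‖^2 := by
    have h24 : 0 ≤ 2 - 4*η := by linarith
    nlinarith [hlb]
  have h5 : (r - 2*η)^2 ≤ ‖u - v‖^2 := by
    have : 0 ≤ r - 2*η := by linarith
    nlinarith [hw]
  have hr3 : r ≤ 3 := by
    rw [← hab]
    have h1 : ‖a - b‖ ≤ ‖a - a'‖ + ‖a' - p‖ + ‖p - b'‖ + ‖b' - b‖ := by
      calc ‖a - b‖ = ‖(a - a') + (a' - p) + (p - b') + (b' - b)‖ := by abel_nf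
        _ ≤ _ := by
            refine le_trans (norm_add_le _ _) ?_
            gcongr
            refine le_trans (norm_add_le _ _) ?_
            gcongr
            exact norm_add_le _ _
    have h2 : ‖a - a'‖ < η := by rwa [norm_sub_rev]
    have h3 : ‖p - b'‖ = 1 := by rw [norm_sub_rev]; exact hpb
    linarith [h1, hpa, h2, h3.le]
  have e1 : ‖u + v‖^2 ≤ 4 - (r - 2*η)^2 := by linarith [hpar, h5]
  have hcomb : (2 - 4*η)^2 + (r - 2*η)^2 ≤ 4 := by linarith [h4, e1]
  have hrη : r * η ≤ 3 * η := mul_le_mul_of_nonneg_right hr3 hη0.le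
  nlinarith [hcomb, hrη, hη3, hη0, sq_nonneg η]

private def eV (d : ℕ) (i : Fin d) : EuclideanSpace ℝ (Fin d) := EuclideanSpace.single i 1

private lemma inner_eV (d : ℕ) (i j : Fin d) : ⟪eV d i, eV d j⟫ = if i = j then (1:ℝ) else 0 := by
  rw [eV, eV, EuclideanSpace.inner_single_left]
  simp [eq_comm]

private lemma inner_eV_apply (d : ℕ) (i : Fin d) (q : EuclideanSpace ℝ (Fin d)) :
    ⟪eV d i, q⟫ = q i := by
  rw [eV, EuclideanSpace.inner_single_left]; simp

private def uV (d : ℕ) (δ : ℝ) (L i : Fin d) : EuclideanSpace ℝ (Fin d) :=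
  if i = L then eV d L else Real.sqrt (1 - δ ^ 2) • eV d L + δ • eV d i

private lemma uV_unit (d : ℕ) (δ : ℝ) (hδ0 : 0 ≤ δ) (hδ1 : δ ≤ 1) (L i : Fin d) :
    ⟪uV d δ L i, uV d δ L i⟫ = (1:ℝ) := by
  have hs2 : Real.sqrt (1 - δ ^ 2) ^ 2 = 1 - δ ^ 2 := Real.sq_sqrt (by nlinarith)
  rw [uV]
  by_cases h : i = L
  · rw [if_pos h, inner_eV, if_pos rfl]
  · have h' : L ≠ i := fun hh => h hh.symm
    rw [if_neg h, inner_add_add_self]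
    simp only [real_inner_smul_left, real_inner_smul_right, inner_eV, if_neg h, if_neg h',
      eq_self_iff_true, if_true, mul_zero, mul_one, zero_add, add_zero]
    nlinarith [hs2]

private lemma uV_span (d : ℕ) (δ : ℝ) (hδ0 : 0 < δ) (L : Fin d)
    (q : EuclideanSpace ℝ (Fin d)) (hq : ∀ i, ⟪uV d δ L i, q⟫ = (0:ℝ)) : q = 0 := by
  have hqL : q L = 0 := by
    have := hq L
    rwa [uV, if_pos rfl, inner_eV_apply] at this
  have hqi : ∀ i, q i = 0 := by
    intro i
    by_cases h : i = L
    · rw [h]; exact hqL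
    · have := hq i
      rw [uV, if_neg h, inner_add_left, real_inner_smul_left, real_inner_smul_left,
        inner_eV_apply, inner_eV_apply, hqL, mul_zero, zero_add] at this
      rcases mul_eq_zero.mp this with h' | h'
      · exact absurd h' (ne_of_gt hδ0)
      · exact h'
  ext i
  exact hqi i

private lemma uV_near (d : ℕ) (δ : ℝ) (hδ0 : 0 ≤ δ) (hδ1 : δ ≤ 1) (L i : Fin d) :
    ‖uV d δ L i - eV d L‖ ^ 2 ≤ 2 * δ ^ 2 := by
  have hs2 : Real.sqrt (1 - δ ^ 2) ^ 2 = 1 - δ ^ 2 := Real.sq_sqrt (by nlinarith)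
  have hsge : 1 - δ ^ 2 ≤ Real.sqrt (1 - δ ^ 2) := by
    nlinarith [hs2, Real.sqrt_nonneg (1 - δ ^ 2), sq_nonneg (Real.sqrt (1 - δ ^ 2) - (1 - δ ^ 2))]
  rw [uV]
  by_cases h : i = L
  · rw [if_pos h]; simp; positivity
  · rw [if_neg h]
    have hv : Real.sqrt (1 - δ ^ 2) • eV d L + δ • eV d i - eV d L
        = (Real.sqrt (1 - δ ^ 2) - 1) • eV d L + δ • eV d i := by
      rw [sub_smul, one_smul]; abel
    have h' : L ≠ i := fun hh => h hh.symm
    rw [hv, ← real_inner_self_eq_norm_sq, inner_add_add_self]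
    simp only [real_inner_smul_left, real_inner_smul_right, inner_eV, if_neg h, if_neg h',
      eq_self_iff_true, if_true, mul_zero, mul_one, zero_add, add_zero]
    nlinarith [hs2, hsge, Real.sqrt_nonneg (1 - δ ^ 2)]

set_option maxHeartbeats 1000000 in
private lemma sphere_config (d : ℕ) (hd : 0 < d) (c : EuclideanSpace ℝ (Fin d)) (ρ : ℝ)
    (hρ : 0 < ρ) :
    ∃ (x₀ : Fin d → EuclideanSpace ℝ (Fin d)) (ε : ℝ), 0 < ε ∧ (∀ i, dist (x₀ i) c < ρ) ∧
      ∀ x : Fin d → EuclideanSpace ℝ (Fin d), (∀ i, dist (x i) (x₀ i) < ε) →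
        ∃ p, ∀ i, x i ∈ sphere p 1 := by
  classical
  haveI : Nonempty (Fin d) := ⟨⟨0, hd⟩⟩
  set δ : ℝ := min (ρ / 2) 1 with hδ
  have hδ0 : 0 < δ := lt_min (by positivity) one_pos
  have hδ1 : δ ≤ 1 := min_le_right _ _
  have hδρ : δ ≤ ρ / 2 := min_le_left _ _
  set L : Fin d := ⟨d - 1, by omega⟩ with hL
  set u : Fin d → EuclideanSpace ℝ (Fin d) := fun i => uV d δ L i with hu
  set p₀ : EuclideanSpace ℝ (Fin d) := c - eV d L with hp₀
  set x₀ : Fin d → EuclideanSpace ℝ (Fin d) := fun i => p₀ + u i with hx₀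
  have hval : ∀ i, x₀ i - p₀ = u i := fun i => add_sub_cancel_left _ _
  have hnear : ∀ i, dist (x₀ i) c < ρ := by
    intro i
    have hxc : x₀ i - c = u i - eV d L := by rw [hx₀, hp₀]; simp only; abel
    rw [dist_eq_norm, hxc]
    have h2 := uV_near d δ hδ0.le hδ1 L i
    rw [hu]
    nlinarith [norm_nonneg (uV d δ L i - eV d L), h2, hδρ, hδ0, hρ]
  set φ : Fin d → (EuclideanSpace ℝ (Fin d) × (Fin d → EuclideanSpace ℝ (Fin d))) →L[ℝ]
      EuclideanSpace ℝ (Fin d) := fun i =>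
    (ContinuousLinearMap.comp (ContinuousLinearMap.proj i)
      (ContinuousLinearMap.snd ℝ (EuclideanSpace ℝ (Fin d)) (Fin d → EuclideanSpace ℝ (Fin d)))) -
      ContinuousLinearMap.fst ℝ (EuclideanSpace ℝ (Fin d)) (Fin d → EuclideanSpace ℝ (Fin d))
      with hφdef
  have hφapp : ∀ i z, φ i z = z.2 i - z.1 := by intro i z; simp [hφdef]
  set D : Fin d → (EuclideanSpace ℝ (Fin d) × (Fin d → EuclideanSpace ℝ (Fin d))) →L[ℝ] ℝ :=
    fun i => (fderivInnerCLM ℝ (u i, u i)).comp ((φ i).prod (φ i)) with hD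
  set T : (EuclideanSpace ℝ (Fin d) × (Fin d → EuclideanSpace ℝ (Fin d))) →L[ℝ]
      (Fin d → ℝ) × (Fin d → EuclideanSpace ℝ (Fin d)) :=
    (ContinuousLinearMap.pi D).prod
      (ContinuousLinearMap.snd ℝ (EuclideanSpace ℝ (Fin d)) (Fin d → EuclideanSpace ℝ (Fin d)))
      with hT
  set g : (EuclideanSpace ℝ (Fin d) × (Fin d → EuclideanSpace ℝ (Fin d))) →
      (Fin d → ℝ) × (Fin d → EuclideanSpace ℝ (Fin d)) :=
    fun z => (fun i => ⟪z.2 i - z.1, z.2 i - z.1⟫ - 1, z.2) with hg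
  have hder : HasStrictFDerivAt g T (p₀, x₀) := by
    apply HasStrictFDerivAt.prodMk
    · apply hasStrictFDerivAt_pi''
      intro i
      rw [ContinuousLinearMap.proj_pi]
      have hfn : (fun z : EuclideanSpace ℝ (Fin d) × (Fin d → EuclideanSpace ℝ (Fin d)) =>
          z.2 i - z.1) = ⇑(φ i) := by
        funext z; rw [hφapp]
      have hφs : HasStrictFDerivAt (fun z : EuclideanSpace ℝ (Fin d) ×
          (Fin d → EuclideanSpace ℝ (Fin d)) => z.2 i - z.1) (φ i) (p₀, x₀) := by
        rw [hfn]; exact (φ i).hasStrictFDerivAt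
      have hin := (hφs.inner (𝕜 := ℝ) hφs).sub_const 1
      rw [hD]
      have he : (p₀, x₀).2 i - (p₀, x₀).1 = u i := hval i
      rw [he] at hin
      exact hin
    · exact hasStrictFDerivAt_snd
  have hfinrank : Module.finrank ℝ (EuclideanSpace ℝ (Fin d) ×
        (Fin d → EuclideanSpace ℝ (Fin d)))
      = Module.finrank ℝ ((Fin d → ℝ) × (Fin d → EuclideanSpace ℝ (Fin d))) := by
    simp [Module.finrank_prod, Module.finrank_pi_fintype, finrank_euclideanSpace_fin]
  have hinj : Function.Injective
      ((T : (EuclideanSpace ℝ (Fin d) × (Fin d → EuclideanSpace ℝ (Fin d))) →ₗ[ℝ]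
        (Fin d → ℝ) × (Fin d → EuclideanSpace ℝ (Fin d)))) := by
    rw [← LinearMap.ker_eq_bot, Submodule.eq_bot_iff]
    rintro ⟨q, v⟩ hz
    have hz' : T (q, v) = 0 := hz
    rw [hT] at hz'
    have h2 : v = 0 := congrArg Prod.snd hz'
    have h1 : ∀ i, D i (q, v) = 0 := fun i => congrFun (congrArg Prod.fst hz') i
    have hq : q = 0 := by
      apply uV_span d δ hδ0 L
      intro i
      have h3 := h1 i
      rw [hD] at h3
      simp only [ContinuousLinearMap.comp_apply, ContinuousLinearMap.prod_apply,
        fderivInnerCLM_apply] at h3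
      rw [hφapp] at h3
      rw [h2] at h3
      simp only [Pi.zero_apply, zero_sub, inner_neg_right, inner_neg_left] at h3
      have h3' : -⟪uV d δ L i, q⟫ + -⟪q, uV d δ L i⟫ = (0:ℝ) := h3
      have hcm := real_inner_comm q (uV d δ L i)
      linarith
    rw [hq, h2]
    rfl
  have hrange : LinearMap.range (T : (EuclideanSpace ℝ (Fin d) × (Fin d → EuclideanSpace ℝ (Fin d))) →ₗ[ℝ]
        (Fin d → ℝ) × (Fin d → EuclideanSpace ℝ (Fin d))) = ⊤ := by
    rw [LinearMap.range_eq_top]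
    exact (LinearMap.injective_iff_surjective_of_finrank_eq_finrank hfinrank).mp hinj
  have hmap := hder.map_nhds_eq_of_surj hrange
  have hval0 : g (p₀, x₀) = (0, x₀) := by
    rw [hg]
    refine Prod.ext ?_ rfl
    funext i
    show ⟪x₀ i - p₀, x₀ i - p₀⟫ - 1 = 0
    rw [hval i, hu]
    rw [uV_unit d δ hδ0.le hδ1 L i]
    simp
  have hrm : range g ∈ 𝓝 ((0 : Fin d → ℝ), x₀) := by
    rw [← hval0, ← hmap]
    exact Filter.range_mem_map
  obtain ⟨ε, hε0, hεsub⟩ := Metric.mem_nhds_iff.mp hrm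
  refine ⟨x₀, ε, hε0, hnear, ?_⟩
  intro x hx
  have hmem : ((0 : Fin d → ℝ), x) ∈ Metric.ball ((0 : Fin d → ℝ), x₀) ε := by
    rw [mem_ball, Prod.dist_eq]
    apply max_lt
    · simpa using hε0
    · exact (dist_pi_lt_iff hε0).mpr hx
  obtain ⟨z, hzeq⟩ := hεsub hmem
  refine ⟨z.1, fun i => ?_⟩
  have h2 : z.2 = x := congrArg Prod.snd hzeq
  have h1 : ⟪z.2 i - z.1, z.2 i - z.1⟫ - 1 = 0 := by
    have h3 := congrFun (congrArg Prod.fst hzeq) i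
    simpa [hg] using h3
  rw [h2] at h1
  rw [mem_sphere_iff_norm]
  have hin : ⟪x i - z.1, x i - z.1⟫ = (1:ℝ) := by linarith
  rw [real_inner_self_eq_norm_mul_norm] at hin
  rcases mul_self_eq_one_iff.mp hin with h | h
  · exact h
  · exfalso; nlinarith [norm_nonneg (x i - z.1)]


set_option maxHeartbeats 1000000 in
/-- hyperconvex position can fail for `d ≥ 3`: let `K ⊆ ℝ^d` be a
`1`-hyperconvex body. For `d = 2`, any two points of `K` lie on a common unit circle, so
the probability `η₂(K)` that two i.i.d. uniform points of `K` are in hyperconvex position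
is `1`; while for `d ≥ 3` there exist `x₁,…,x_d ∈ K` through which no translate of
`S^{d-1}` passes, and `0 < η_d(K) < 1`. -/
theorem stmt_19 (d : ℕ) (hd : 2 ≤ d) (K : Set (EuclideanSpace ℝ (Fin d)))
    (hKcomp : IsCompact K) (hKconv : Convex ℝ K) (hKint : (interior K).Nonempty)
    (hKhyp : ∀ x ∈ K, ∀ y ∈ K, spindle d 1 x y ⊆ K) :
    (d = 2 → (∀ x ∈ K, ∀ y ∈ K, ∃ p : EuclideanSpace ℝ (Fin d),
        x ∈ sphere p 1 ∧ y ∈ sphere p 1) ∧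
      ((Measure.pi fun _ : Fin d => (volume K)⁻¹ • volume.restrict K)
        {x : Fin d → EuclideanSpace ℝ (Fin d) | ∃ p, ∀ i, x i ∈ sphere p 1}).toReal = 1) ∧
    (3 ≤ d →
      (∃ x : Fin d → EuclideanSpace ℝ (Fin d), (∀ i, x i ∈ K) ∧
        ¬ ∃ p : EuclideanSpace ℝ (Fin d), ∀ i, x i ∈ sphere p 1) ∧
      0 < ((Measure.pi fun _ : Fin d => (volume K)⁻¹ • volume.restrict K)
        {x : Fin d → EuclideanSpace ℝ (Fin d) | ∃ p, ∀ i, x i ∈ sphere p 1}).toReal ∧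
      ((Measure.pi fun _ : Fin d => (volume K)⁻¹ • volume.restrict K)
        {x : Fin d → EuclideanSpace ℝ (Fin d) | ∃ p, ∀ i, x i ∈ sphere p 1}).toReal < 1) := by
  classical
  obtain ⟨c, hcK⟩ := hKint
  obtain ⟨ρ, hρ0, hρsub⟩ := Metric.isOpen_iff.mp isOpen_interior c hcK
  -- diameter at most 2
  have hdiam : ∀ x ∈ K, ∀ y ∈ K, dist x y ≤ 2 := by
    intro x hx y hy
    by_contra hgt
    push_neg at hgt
    have hKuniv : (univ : Set (EuclideanSpace ℝ (Fin d))) ⊆ K := by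
      intro z _
      apply hKhyp x hx y hy
      intro c' hc'
      exfalso
      have hx' := hc' (mem_insert _ _)
      have hy' := hc' (mem_insert_of_mem _ rfl)
      have h1 : dist x y ≤ 2 :=
        calc dist x y ≤ dist x c' + dist c' y := dist_triangle _ _ _
          _ ≤ 1 + 1 := add_le_add (mem_closedBall.mp hx')
              (by rw [dist_comm]; exact mem_closedBall.mp hy')
          _ = 2 := by norm_num
      linarith
    obtain ⟨R, hR⟩ := hKcomp.isBounded.subset_closedBall 0
    have hR0 : 0 ≤ R := by
      have := hR (hKuniv (mem_univ 0))
      rw [mem_closedBall, dist_self] at this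
      exact this
    have hw := hR (hKuniv (mem_univ (EuclideanSpace.single ⟨0, by omega⟩ (R + 1))))
    rw [mem_closedBall, dist_zero_right, EuclideanSpace.norm_single, Real.norm_eq_abs,
      abs_of_nonneg (by linarith)] at hw
    linarith
  -- the measure
  set μ : Measure (EuclideanSpace ℝ (Fin d)) := (volume K)⁻¹ • volume.restrict K with hμdef
  have hK0 : volume K ≠ 0 := by
    have hball : 0 < volume (ball c ρ) := Metric.measure_ball_pos volume c hρ0
    have : volume (ball c ρ) ≤ volume K :=
      measure_mono (fun z hz => interior_subset (hρsub hz))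
    exact fun h => by simp [h] at this; exact absurd this (by simpa using hball.ne')
  have hKtop : volume K ≠ ⊤ := hKcomp.measure_lt_top.ne
  have hKmeas : MeasurableSet K := hKcomp.isClosed.measurableSet
  haveI hμprob : IsProbabilityMeasure μ := by
    constructor
    rw [hμdef, Measure.smul_apply, Measure.restrict_apply_univ, smul_eq_mul]
    exact ENNReal.inv_mul_cancel hK0 hKtop
  have hμK : μ K = 1 := by
    rw [hμdef, Measure.smul_apply, Measure.restrict_apply hKmeas, inter_self, smul_eq_mul]
    exact ENNReal.inv_mul_cancel hK0 hKtop
  have hopen_ne : ∀ U : Set (EuclideanSpace ℝ (Fin d)),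
      IsOpen U → U.Nonempty → U ⊆ K → μ U ≠ 0 := by
    intro U hUo hUne hUK
    rw [hμdef, Measure.smul_apply, Measure.restrict_apply hUo.measurableSet,
      inter_eq_self_of_subset_left hUK, smul_eq_mul]
    exact mul_ne_zero (ENNReal.inv_ne_zero.mpr hKtop) (hUo.measure_ne_zero volume hUne)
  constructor
  · -- d = 2
    intro h2
    subst h2
    constructor
    · intro x hx y hy
      exact two_pt hd x y (hdiam x hx y hy)
    · have hsub : (univ.pi fun _ : Fin 2 => K) ⊆
          {x : Fin 2 → EuclideanSpace ℝ (Fin 2) | ∃ p, ∀ i, x i ∈ sphere p 1} := by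
        intro x hx
        have h0 : x 0 ∈ K := hx 0 (mem_univ _)
        have h1 : x 1 ∈ K := hx 1 (mem_univ _)
        obtain ⟨p, hp0, hp1⟩ := two_pt hd (x 0) (x 1) (hdiam _ h0 _ h1)
        refine ⟨p, fun i => ?_⟩
        fin_cases i
        · exact hp0
        · exact hp1
      have h1 : Measure.pi (fun _ : Fin 2 => μ) (univ.pi fun _ : Fin 2 => K) = 1 := by
        rw [Measure.pi_pi]
        simp [hμK]
      have hle : (1 : ℝ≥0∞) ≤ Measure.pi (fun _ : Fin 2 => μ)
          {x : Fin 2 → EuclideanSpace ℝ (Fin 2) | ∃ p, ∀ i, x i ∈ sphere p 1} :=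
        h1 ▸ measure_mono hsub
      have heq : Measure.pi (fun _ : Fin 2 => μ)
          {x : Fin 2 → EuclideanSpace ℝ (Fin 2) | ∃ p, ∀ i, x i ∈ sphere p 1} = 1 :=
        le_antisymm prob_le_one hle
      rw [heq, ENNReal.toReal_one]
  · -- d ≥ 3
    intro h3
    set e0 : EuclideanSpace ℝ (Fin d) := EuclideanSpace.single ⟨0, by omega⟩ 1 with he0
    set t : ℝ := min (ρ / 2) 1 with htdef
    have ht0 : 0 < t := lt_min (by positivity) one_pos
    have ht1 : t ≤ 1 := min_le_right _ _
    have htρ : t ≤ ρ / 2 := min_le_left _ _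
    have he0n : ‖e0‖ = 1 := by rw [he0, EuclideanSpace.norm_single]; norm_num
    set b : EuclideanSpace ℝ (Fin d) := c + t • e0 with hb
    set m : EuclideanSpace ℝ (Fin d) := midpoint ℝ c b with hmdef
    have habn : ‖c - b‖ = t := by
      rw [hb]
      have h4 : c - (c + t • e0) = -(t • e0) := by abel
      rw [h4, norm_neg, norm_smul, he0n, Real.norm_eq_abs, abs_of_pos ht0, mul_one]
    have hmc : m = c + (t / 2) • e0 := by
      rw [hmdef, midpoint_eq_smul_add, invOf_eq_inv, hb]
      module
    have haK : c ∈ interior K := hρsub (by simpa using hρ0)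
    have hbK : b ∈ interior K := by
      apply hρsub
      have h4 : dist b c = t := by
        rw [dist_eq_norm, hb]
        have h5 : c + t • e0 - c = t • e0 := by abel
        rw [h5, norm_smul, he0n, Real.norm_eq_abs, abs_of_pos ht0, mul_one]
      rw [mem_ball, h4]; linarith
    have hmK : m ∈ interior K := by
      apply hρsub
      have h4 : dist m c = t / 2 := by
        rw [dist_eq_norm, hmc]
        have h5 : c + (t / 2) • e0 - c = (t / 2) • e0 := by abel
        rw [h5, norm_smul, he0n, Real.norm_eq_abs, abs_of_pos (by linarith), mul_one]
      rw [mem_ball, h4]; linarith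
    set η : ℝ := t ^ 2 / 65 with hηdef
    have hη0 : 0 < η := by positivity
    have hη1 : 4 * η ≤ t := by rw [hηdef]; nlinarith
    have hη2 : η ≤ 1 / 2 := by rw [hηdef]; nlinarith
    have hη3 : 65 * η ≤ t ^ 2 := by rw [hηdef]; linarith
    set x₀ : Fin d → EuclideanSpace ℝ (Fin d) :=
      fun i => if i.val = 0 then c else if i.val = 1 then b else m with hx₀def
    have hx₀0 : x₀ ⟨0, by omega⟩ = c := by simp [hx₀def]
    have hx₀1 : x₀ ⟨1, by omega⟩ = b := by simp [hx₀def]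
    have hx₀2 : x₀ ⟨2, by omega⟩ = m := by simp [hx₀def]
    have hx₀int : ∀ i, x₀ i ∈ interior K := by
      intro i
      rw [hx₀def]
      simp only
      split_ifs <;> assumption
    refine ⟨⟨x₀, fun i => interior_subset (hx₀int i), ?_⟩, ?_, ?_⟩
    · rintro ⟨p, hp⟩
      refine quant c b m c b m p t η hη0 hη1 hη2 hη3 habn hmdef ?_ ?_ ?_ ?_ ?_ ?_
      · simpa using hη0
      · simpa using hη0
      · simpa using hη0
      · have := hp ⟨0, by omega⟩
        rwa [hx₀0, mem_sphere_iff_norm] at this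
      · have := hp ⟨1, by omega⟩
        rwa [hx₀1, mem_sphere_iff_norm] at this
      · have := hp ⟨2, by omega⟩
        rwa [hx₀2, mem_sphere_iff_norm] at this
    · -- positive probability
      obtain ⟨y₀, ε, hε0, hnear, hsol⟩ := sphere_config d (by omega) c ρ hρ0
      set B : Fin d → Set (EuclideanSpace ℝ (Fin d)) :=
        fun i => ball (y₀ i) ε ∩ interior K with hB
      have hBsub : (univ.pi B) ⊆
          {x : Fin d → EuclideanSpace ℝ (Fin d) | ∃ p, ∀ i, x i ∈ sphere p 1} := by
        intro x hx
        apply hsol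
        intro i
        have := (hx i (mem_univ i)).1
        rwa [mem_ball] at this
      have hBne : ∀ i, μ (B i) ≠ 0 := by
        intro i
        apply hopen_ne _ (isOpen_ball.inter isOpen_interior)
        · exact ⟨y₀ i, mem_ball_self hε0, hρsub (by rw [mem_ball]; exact hnear i)⟩
        · exact fun z hz => interior_subset hz.2
      have hpos : Measure.pi (fun _ : Fin d => μ) (univ.pi B) ≠ 0 := by
        rw [Measure.pi_pi]
        rw [Finset.prod_ne_zero_iff]
        exact fun i _ => hBne i
      have hle : Measure.pi (fun _ : Fin d => μ) (univ.pi B) ≤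
          Measure.pi (fun _ : Fin d => μ)
            {x : Fin d → EuclideanSpace ℝ (Fin d) | ∃ p, ∀ i, x i ∈ sphere p 1} :=
        measure_mono hBsub
      apply ENNReal.toReal_pos
      · exact fun h => hpos (le_antisymm (h ▸ hle) zero_le)
      · exact measure_ne_top _ _
    · -- probability less than one
      set B : Fin d → Set (EuclideanSpace ℝ (Fin d)) :=
        fun i => ball (x₀ i) η ∩ interior K with hB
      have hBdisj : (univ.pi B) ⊆
          {x : Fin d → EuclideanSpace ℝ (Fin d) | ∃ p, ∀ i, x i ∈ sphere p 1}ᶜ := by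
        intro x hx
        rintro ⟨p, hp⟩
        have hdist : ∀ i, ‖x i - x₀ i‖ < η := by
          intro i
          have := (hx i (mem_univ i)).1
          rwa [mem_ball, dist_eq_norm] at this
        refine quant c b m (x ⟨0, by omega⟩) (x ⟨1, by omega⟩) (x ⟨2, by omega⟩) p t η
          hη0 hη1 hη2 hη3 habn hmdef ?_ ?_ ?_ ?_ ?_ ?_
        · have := hdist ⟨0, by omega⟩; rwa [hx₀0] at this
        · have := hdist ⟨1, by omega⟩; rwa [hx₀1] at this
        · have := hdist ⟨2, by omega⟩; rwa [hx₀2] at this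
        · rw [← mem_sphere_iff_norm]; exact hp _
        · rw [← mem_sphere_iff_norm]; exact hp _
        · rw [← mem_sphere_iff_norm]; exact hp _
      have hBne : ∀ i, μ (B i) ≠ 0 := by
        intro i
        apply hopen_ne _ (isOpen_ball.inter isOpen_interior)
        · exact ⟨x₀ i, mem_ball_self hη0, hx₀int i⟩
        · exact fun z hz => interior_subset hz.2
      have hpos : Measure.pi (fun _ : Fin d => μ) (univ.pi B) ≠ 0 := by
        rw [Measure.pi_pi, Finset.prod_ne_zero_iff]
        exact fun i _ => hBne i
      have hBmeas : MeasurableSet (univ.pi B) :=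
        MeasurableSet.univ_pi fun i => (isOpen_ball.inter isOpen_interior).measurableSet
      have hcompl : Measure.pi (fun _ : Fin d => μ) (univ.pi B)ᶜ
          = 1 - Measure.pi (fun _ : Fin d => μ) (univ.pi B) := by
        rw [measure_compl hBmeas (measure_ne_top _ _), measure_univ]
      have hlt : Measure.pi (fun _ : Fin d => μ)
          {x : Fin d → EuclideanSpace ℝ (Fin d) | ∃ p, ∀ i, x i ∈ sphere p 1} < 1 := by
        have hstep : Measure.pi (fun _ : Fin d => μ)
            {x : Fin d → EuclideanSpace ℝ (Fin d) | ∃ p, ∀ i, x i ∈ sphere p 1}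
            ≤ Measure.pi (fun _ : Fin d => μ) (univ.pi B)ᶜ := by
          apply measure_mono
          intro x hx
          exact fun hmem => hBdisj hmem hx
        refine lt_of_le_of_lt hstep ?_
        rw [hcompl]
        exact ENNReal.sub_lt_self ENNReal.one_ne_top one_ne_zero hpos
      rw [← ENNReal.toReal_one]
      exact (ENNReal.toReal_lt_toReal (ne_top_of_lt (lt_of_lt_of_le hlt le_top))
        ENNReal.one_ne_top).mpr hlt

end
end
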